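/- arXiv:2003.13129 — 7 statements merged into one kernel-verified Lean document; each statement's English description precedes it below -/
import Mathlib

section
/- Let L_A and L_B be two distinct lines in the complex projective plane, let A1, A2, A3 be three mutually distinct points on L_A and B1, B2, B3 three mutually distinct points on L_B, all six points distinct from the intersection point L_A ∩ L_B. Then each of the pairs of lines (L(A2,B3), L(A3,B2)), (L(A1,B3), L(A3,B1)), (L(A1,B2), L(A2,B1)) consists of two distinct lines, so the points C1 = L(A2,B3) ∩ L(A3,B2), C2 = L(A1,B3) ∩ L(A3,B1), C3 = L(A1,B2) ∩ L(A2,B1) are well defined, and C1, C2, C3 are collinear. -/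
noncomputable section

namespace PappusPaper

/-- A representative vector of homogeneous coordinates: a point (or a line,
via its coefficient vector) of `ℙ²(ℂ)` is a nonzero `v : Fin 3 → ℂ` up to scalar. -/
abbrev Pt : Type := Fin 3 → ℂ

/-- Cross product: coefficient vector of the line through two points,
and likewise a representative of the intersection point of two lines. -/
def cp (p q : Pt) : Pt :=
  ![p 1 * q 2 - p 2 * q 1, p 2 * q 0 - p 0 * q 2, p 0 * q 1 - p 1 * q 0]

/-- The point `p = (p 0 : p 1 : p 2)` lies on the line `l 0 * x + l 1 * y + l 2 * z = 0`. -/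
def onL (l p : Pt) : Prop := l 0 * p 0 + l 1 * p 1 + l 2 * p 2 = 0

/-- `p` and `q` represent the same projective point (resp. the same line). -/
def projEq (p q : Pt) : Prop := ∃ t : ℂ, t ≠ 0 ∧ q = t • p

/-- Determinant of the 3×3 matrix whose columns are `p`, `q`, `r`. -/
def det3 (p q r : Pt) : ℂ :=
  p 0 * (q 1 * r 2 - q 2 * r 1) - p 1 * (q 0 * r 2 - q 2 * r 0) +
    p 2 * (q 0 * r 1 - q 1 * r 0)

/-- Three points lie on a common line. -/
def Collin (p q r : Pt) : Prop := ∃ l : Pt, l ≠ 0 ∧ onL l p ∧ onL l q ∧ onL l r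

/-- The cross-ratio `[A,B;C,D]` of four collinear points, computed from an
auxiliary point `O` not on their common line. -/
def crossRatio (O A B C D : Pt) : ℂ :=
  (det3 O A C * det3 O B D) / (det3 O A D * det3 O B C)

/-- The points `A1 = (1:0:0)`, `A2 = (1:a:0)`, `A3 = (0:1:0)` (0-indexed). -/
def ptA (a : ℂ) : Fin 3 → Pt := ![![1, 0, 0], ![1, a, 0], ![0, 1, 0]]

/-- The points `B1 = (1:1:b)`, `B2 = (0:0:1)`, `B3 = (1:1:1)` (0-indexed). -/
def ptB (b : ℂ) : Fin 3 → Pt := ![![1, 1, b], ![0, 0, 1], ![1, 1, 1]]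

/-- The line `L_A : z = 0`. -/
def lineA : Pt := ![0, 0, 1]

/-- The line `L_B : x - y = 0`. -/
def lineB : Pt := ![1, -1, 0]

/-- The intersection point `S = (1:1:0)` of `L_A` and `L_B`. -/
def Spt : Pt := ![1, 1, 0]

/-- Given a triple `P` of points on one line and a triple `Q` of points on another
line, and a permutation `σ` of indices, the three Pappus intersection points
`C_{1,σ} = L(P2,Q_{σ(3)}) ∩ L(P3,Q_{σ(2)})`, `C_{2,σ} = L(P1,Q_{σ(3)}) ∩ L(P3,Q_{σ(1)})`,
`C_{3,σ} = L(P1,Q_{σ(2)}) ∩ L(P2,Q_{σ(1)})` (0-indexed). -/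
def pappusC (P Q : Fin 3 → Pt) (σ : Fin 3 → Fin 3) : Fin 3 → Pt :=
  ![cp (cp (P 1) (Q (σ 2))) (cp (P 2) (Q (σ 1))),
    cp (cp (P 0) (Q (σ 2))) (cp (P 2) (Q (σ 0))),
    cp (cp (P 0) (Q (σ 1))) (cp (P 1) (Q (σ 0)))]

/-- The Pappus line: the line through the (collinear) points
`C_{1,σ}` and `C_{2,σ}`. -/
def pappusLine (P Q : Fin 3 → Pt) (σ : Fin 3 → Fin 3) : Pt :=
  cp (pappusC P Q σ 0) (pappusC P Q σ 1)

/-- The points `C_{1,σ}, C_{2,σ}, C_{3,σ}` of the fixed configuration (0-indexed). -/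
def Cpt (a b : ℂ) (σ : Fin 3 → Fin 3) : Fin 3 → Pt := pappusC (ptA a) (ptB b) σ

/-- The Pappus line `L_{C,σ}` of the fixed configuration. -/
def LC (a b : ℂ) (σ : Fin 3 → Fin 3) : Pt := pappusLine (ptA a) (ptB b) σ

/-- The identity permutation of `{1,2,3}` (0-indexed, as a function). -/
def pid : Fin 3 → Fin 3 := ![0, 1, 2]
/-- `τ₂ = (1↦2, 2↦1, 3↦3)` (0-indexed, as a function). -/
def tau2 : Fin 3 → Fin 3 := ![1, 0, 2]
/-- `τ₃ = (1↦3, 2↦1, 3↦2)` (0-indexed, as a function). -/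
def tau3 : Fin 3 → Fin 3 := ![2, 0, 1]
/-- `τ₃² = (1↦2, 2↦3, 3↦1)` (0-indexed, as a function). -/
def tau3sq : Fin 3 → Fin 3 := ![1, 2, 0]
/-- `τ₂τ₃ = (1↦3, 2↦2, 3↦1)` (0-indexed, as a function). -/
def tau2tau3 : Fin 3 → Fin 3 := ![2, 1, 0]
/-- `τ₂τ₃² = (1↦1, 2↦3, 3↦2)` (0-indexed, as a function). -/
def tau2tau3sq : Fin 3 → Fin 3 := ![0, 2, 1]

/-- The line `M1 : (ab−b+1)x + a(ab−a+1)y + a(b²−b+1)z = 0` of the dual plane. -/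
def M1 (a b : ℂ) : Pt := ![a * b - b + 1, a * (a * b - a + 1), a * (b ^ 2 - b + 1)]

/-- The line `M2 : (a+b−1)x + a(a+b−ab)y + a(b²−b+1)z = 0` of the dual plane. -/
def M2 (a b : ℂ) : Pt := ![a + b - 1, a * (a + b - a * b), a * (b ^ 2 - b + 1)]

/-- The dual points of the three even Pappus lines `L_{C,id}, L_{C,τ₃}, L_{C,τ₃²}`,
lying on `M1`. -/
def Ppts (a b : ℂ) : Fin 3 → Pt := ![LC a b pid, LC a b tau3, LC a b tau3sq]

/-- The dual points of the three odd Pappus lines `L_{C,τ₂}, L_{C,τ₂τ₃}, L_{C,τ₂τ₃²}`,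
lying on `M2`. -/
def Qpts (a b : ℂ) : Fin 3 → Pt := ![LC a b tau2, LC a b tau2tau3, LC a b tau2tau3sq]

/-- The Pappus line `N_σ` of the dual configuration, obtained by applying the Pappus
construction in the dual plane to the two triples of dual points of the Pappus lines;
its coordinate vector is also a representative of its dual point `N_σ*` in the
original plane. -/
def Nline (a b : ℂ) (σ : Fin 3 → Fin 3) : Pt := pappusLine (Ppts a b) (Qpts a b) σ

lemma ne_zero_iff (p : Pt) : p ≠ 0 ↔ p 0 ≠ 0 ∨ p 1 ≠ 0 ∨ p 2 ≠ 0 := by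
  constructor
  · intro hp
    by_contra h
    push_neg at h
    exact hp (funext fun i => by fin_cases i <;> simp [h.1, h.2.1, h.2.2])
  · rintro (h | h | h) rfl <;> simp at h

lemma cp_eq_zero_imp {p q : Pt} (hp : p ≠ 0) (h : cp p q = 0) : ∃ t : ℂ, q = t • p := by
  have h0 := congrFun h 0
  have h1 := congrFun h 1
  have h2 := congrFun h 2
  simp only [cp, Matrix.cons_val_zero, Matrix.cons_val_one, Matrix.head_cons,
    Matrix.cons_val_two, Matrix.tail_cons, Pi.zero_apply, sub_eq_zero] at h0 h1 h2
  rcases (ne_zero_iff p).mp hp with hp0 | hp1 | hp2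
  · have e0 : q 0 = q 0 / p 0 * p 0 := by field_simp
    have e1 : q 1 = q 0 / p 0 * p 1 := by
      field_simp
      first | linear_combination h2 | linear_combination -h2
    have e2 : q 2 = q 0 / p 0 * p 2 := by
      field_simp
      first | linear_combination h1 | linear_combination -h1
    exact ⟨q 0 / p 0, funext fun i => by fin_cases i; exacts [e0, e1, e2]⟩
  · have e0 : q 0 = q 1 / p 1 * p 0 := by
      field_simp
      first | linear_combination h2 | linear_combination -h2
    have e1 : q 1 = q 1 / p 1 * p 1 := by field_simp
    have e2 : q 2 = q 1 / p 1 * p 2 := by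
      field_simp
      first | linear_combination h0 | linear_combination -h0
    exact ⟨q 1 / p 1, funext fun i => by fin_cases i; exacts [e0, e1, e2]⟩
  · have e0 : q 0 = q 2 / p 2 * p 0 := by
      field_simp
      first | linear_combination h1 | linear_combination -h1
    have e1 : q 1 = q 2 / p 2 * p 1 := by
      field_simp
      first | linear_combination h0 | linear_combination -h0
    have e2 : q 2 = q 2 / p 2 * p 2 := by field_simp
    exact ⟨q 2 / p 2, funext fun i => by fin_cases i; exacts [e0, e1, e2]⟩

lemma projEq_of_cp_zero {p q : Pt} (hp : p ≠ 0) (hq : q ≠ 0) (h : cp p q = 0) :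
    projEq p q := by
  obtain ⟨t, ht⟩ := cp_eq_zero_imp hp h
  refine ⟨t, fun h0 => hq ?_, ht⟩
  simp [ht, h0]

lemma cp_ne_zero {p q : Pt} (hp : p ≠ 0) (hq : q ≠ 0) (h : ¬ projEq p q) :
    cp p q ≠ 0 := fun hc => h (projEq_of_cp_zero hp hq hc)

lemma projEq_symm {p q : Pt} (h : projEq p q) : projEq q p := by
  obtain ⟨t, ht, rfl⟩ := h
  exact ⟨t⁻¹, inv_ne_zero ht, by simp [smul_smul, inv_mul_cancel₀ ht]⟩

lemma projEq_trans {p q r : Pt} (h1 : projEq p q) (h2 : projEq q r) : projEq p r := by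
  obtain ⟨t, ht, rfl⟩ := h1
  obtain ⟨s, hs, rfl⟩ := h2
  exact ⟨s * t, mul_ne_zero hs ht, by simp [smul_smul]⟩

lemma onL_symm {l p : Pt} (h : onL l p) : onL p l := by
  unfold onL at *; linear_combination h

lemma onL_cp_left (p q : Pt) : onL (cp p q) p := by
  simp only [onL, cp, Matrix.cons_val_zero, Matrix.cons_val_one, Matrix.head_cons,
    Matrix.cons_val_two, Matrix.tail_cons]
  ring

lemma onL_cp_right (p q : Pt) : onL (cp p q) q := by
  simp only [onL, cp, Matrix.cons_val_zero, Matrix.cons_val_one, Matrix.head_cons,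
    Matrix.cons_val_two, Matrix.tail_cons]
  ring

lemma onL_smul_pt {l p : Pt} {t : ℂ} (h : onL l p) : onL l (t • p) := by
  simp only [onL, Pi.smul_apply, smul_eq_mul] at *
  linear_combination t * h

lemma onL_smul_line {l p : Pt} {t : ℂ} (h : onL l p) : onL (t • l) p := by
  simp only [onL, Pi.smul_apply, smul_eq_mul] at *
  linear_combination t * h

lemma onL_projEq_pt {l p q : Pt} (h : projEq p q) (hl : onL l p) : onL l q := by
  obtain ⟨t, ht, rfl⟩ := h; exact onL_smul_pt hl

lemma onL_projEq_line {l m p : Pt} (h : projEq l m) (hl : onL l p) : onL m p := by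
  obtain ⟨t, ht, rfl⟩ := h; exact onL_smul_line hl

lemma cp_cp_eq_zero {l m p : Pt} (h1 : onL l p) (h2 : onL m p) : cp (cp l m) p = 0 := by
  unfold onL at h1 h2
  have c0 : cp (cp l m) p 0 = 0 := by
    simp only [cp, Matrix.cons_val_zero, Matrix.cons_val_one, Matrix.head_cons,
      Matrix.cons_val_two, Matrix.tail_cons]
    linear_combination m 0 * h1 - l 0 * h2
  have c1 : cp (cp l m) p 1 = 0 := by
    simp only [cp, Matrix.cons_val_zero, Matrix.cons_val_one, Matrix.head_cons,
      Matrix.cons_val_two, Matrix.tail_cons]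
    linear_combination m 1 * h1 - l 1 * h2
  have c2 : cp (cp l m) p 2 = 0 := by
    simp only [cp, Matrix.cons_val_zero, Matrix.cons_val_one, Matrix.head_cons,
      Matrix.cons_val_two, Matrix.tail_cons]
    linear_combination m 2 * h1 - l 2 * h2
  funext i
  fin_cases i
  · exact c0
  · exact c1
  · exact c2

lemma point_on_two_lines {l m p : Pt} (hl : l ≠ 0) (hm : m ≠ 0) (hlm : ¬ projEq l m)
    (hp : p ≠ 0) (h1 : onL l p) (h2 : onL m p) : projEq (cp l m) p :=
  projEq_of_cp_zero (cp_ne_zero hl hm hlm) hp (cp_cp_eq_zero h1 h2)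

lemma onL_cp_iff {p q r : Pt} : onL (cp p q) r ↔ det3 p q r = 0 := by
  simp only [onL, cp, det3, Matrix.cons_val_zero, Matrix.cons_val_one, Matrix.head_cons,
    Matrix.cons_val_two, Matrix.tail_cons]
  constructor <;> intro h <;> linear_combination h

set_option maxHeartbeats 2000000 in
lemma detC_zero (A B : Fin 3 → Pt)
    (hA : det3 (A 0) (A 1) (A 2) = 0) (hB : det3 (B 0) (B 1) (B 2) = 0) :
    det3 (cp (cp (A 1) (B 2)) (cp (A 2) (B 1)))
      (cp (cp (A 0) (B 2)) (cp (A 2) (B 0)))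
      (cp (cp (A 0) (B 1)) (cp (A 1) (B 0))) = 0 := by
  simp only [det3, cp, Matrix.cons_val_zero, Matrix.cons_val_one, Matrix.head_cons,
    Matrix.cons_val_two, Matrix.tail_cons] at *
  linear_combination (A 0 2*A 1 2*A 2 2*B 0 1^2*B 1 0*B 1 1*B 2 0^2 - A 0 2*A 1 2*A 2 2*B 0 1^2*B 1 0^2*B 2 0*B 2 1 - A 0 2*A 1 2*A 2 2*B 0 0*B 0 1*B 1 1^2*B 2 0^2 + A 0 2*A 1 2*A 2 2*B 0 0*B 0 1*B 1 0^2*B 2 1^2 + A 0 2*A 1 2*A 2 2*B 0 0^2*B 1 1^2*B 2 0*B 2 1 - A 0 2*A 1 2*A 2 2*B 0 0^2*B 1 0*B 1 1*B 2 1^2 - A 0 2*A 1 2*A 2 1*B 0 1*B 0 2*B 1 0*B 1 1*B 2 0^2 + A 0 2*A 1 2*A 2 1*B 0 1*B 0 2*B 1 0^2*B 2 0*B 2 1 + A 0 2*A 1 2*A 2 1*B 0 0*B 0 1*B 1 1*B 1 2*B 2 0^2 - A 0 2*A 1 2*A 2 1*B 0 0*B 0 1*B 1 0^2*B 2 1*B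 2 2 - A 0 2*A 1 2*A 2 1*B 0 0^2*B 1 1*B 1 2*B 2 0*B 2 1 + A 0 2*A 1 2*A 2 1*B 0 0^2*B 1 0*B 1 1*B 2 1*B 2 2 + A 0 2*A 1 2*A 2 0*B 0 1^2*B 1 0*B 1 2*B 2 0*B 2 1 - A 0 2*A 1 2*A 2 0*B 0 1^2*B 1 0*B 1 1*B 2 0*B 2 2 - A 0 2*A 1 2*A 2 0*B 0 0*B 0 2*B 1 1^2*B 2 0*B 2 1 + A 0 2*A 1 2*A 2 0*B 0 0*B 0 2*B 1 0*B 1 1*B 2 1^2 + A 0 2*A 1 2*A 2 0*B 0 0*B 0 1*B 1 1^2*B 2 0*B 2 2 - A 0 2*A 1 2*A 2 0*B 0 0*B 0 1*B 1 0*B 1 2*B 2 1^2 - A 0 2*A 1 1*A 2 2*B 0 1*B 0 2*B 1 0*B 1 1*B 2 0^2 + A 0 2*A 1 1*A 2 2*B 0 1*B 0 2*B 1 0^2*B 2 0*B 2 1 + A 0 2*A 1 1*A 2 2*B 0 0*B 0 1*B 1 1*B 1 2*B 2 0^2 - A 0 2*A 1 1*A 2 2*B 0 0*B 0 1*B 1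 0^2*B 2 1*B 2 2 - A 0 2*A 1 1*A 2 2*B 0 0^2*B 1 1*B 1 2*B 2 0*B 2 1 + A 0 2*A 1 1*A 2 2*B 0 0^2*B 1 0*B 1 1*B 2 1*B 2 2 + A 0 2*A 1 1*A 2 1*B 0 2^2*B 1 0*B 1 1*B 2 0^2 - A 0 2*A 1 1*A 2 1*B 0 2^2*B 1 0^2*B 2 0*B 2 1 - A 0 2*A 1 1*A 2 1*B 0 0*B 0 1*B 1 2^2*B 2 0^2 + A 0 2*A 1 1*A 2 1*B 0 0*B 0 1*B 1 0^2*B 2 2^2 + A 0 2*A 1 1*A 2 1*B 0 0^2*B 1 2^2*B 2 0*B 2 1 - A 0 2*A 1 1*A 2 1*B 0 0^2*B 1 0*B 1 1*B 2 2^2 - A 0 2*A 1 1*A 2 0*B 0 1*B 0 2*B 1 0*B 1 2*B 2 0*B 2 1 + A 0 2*A 1 1*A 2 0*B 0 1*B 0 2*B 1 0*B 1 1*B 2 0*B 2 2 + A 0 2*A 1 1*A 2 0*B 0 0*B 0 2*B 1 1*B 1 2*B 2 0*B 2 1 - A 0 2*A 1 1*A 2 0*B 0 0*B 0 2*B 1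 0*B 1 1*B 2 1*B 2 2 - A 0 2*A 1 1*A 2 0*B 0 0*B 0 1*B 1 1*B 1 2*B 2 0*B 2 2 + A 0 2*A 1 1*A 2 0*B 0 0*B 0 1*B 1 0*B 1 2*B 2 1*B 2 2 + A 0 2*A 1 0*A 2 2*B 0 1*B 0 2*B 1 1^2*B 2 0^2 - A 0 2*A 1 0*A 2 2*B 0 1*B 0 2*B 1 0^2*B 2 1^2 - A 0 2*A 1 0*A 2 2*B 0 1^2*B 1 1*B 1 2*B 2 0^2 + A 0 2*A 1 0*A 2 2*B 0 1^2*B 1 0^2*B 2 1*B 2 2 + A 0 2*A 1 0*A 2 2*B 0 0^2*B 1 1*B 1 2*B 2 1^2 - A 0 2*A 1 0*A 2 2*B 0 0^2*B 1 1^2*B 2 1*B 2 2 - A 0 2*A 1 0*A 2 1*B 0 2^2*B 1 1^2*B 2 0^2 + A 0 2*A 1 0*A 2 1*B 0 2^2*B 1 0^2*B 2 1^2 + A 0 2*A 1 0*A 2 1*B 0 1*B 0 2*B 1 0*B 1 2*B 2 0*B 2 1 - A 0 2*A 1 0*A 2 1*B 0 1*B 0 2*B 1 0*B 1 1*B 2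 0*B 2 2 + A 0 2*A 1 0*A 2 1*B 0 1^2*B 1 2^2*B 2 0^2 - A 0 2*A 1 0*A 2 1*B 0 1^2*B 1 0^2*B 2 2^2 - A 0 2*A 1 0*A 2 1*B 0 0*B 0 2*B 1 1*B 1 2*B 2 0*B 2 1 + A 0 2*A 1 0*A 2 1*B 0 0*B 0 2*B 1 0*B 1 1*B 2 1*B 2 2 + A 0 2*A 1 0*A 2 1*B 0 0*B 0 1*B 1 1*B 1 2*B 2 0*B 2 2 - A 0 2*A 1 0*A 2 1*B 0 0*B 0 1*B 1 0*B 1 2*B 2 1*B 2 2 - A 0 2*A 1 0*A 2 1*B 0 0^2*B 1 2^2*B 2 1^2 + A 0 2*A 1 0*A 2 1*B 0 0^2*B 1 1^2*B 2 2^2 - A 0 2*A 1 0*A 2 0*B 0 1*B 0 2*B 1 1^2*B 2 0*B 2 2 + A 0 2*A 1 0*A 2 0*B 0 1*B 0 2*B 1 0*B 1 2*B 2 1^2 + A 0 2*A 1 0*A 2 0*B 0 1^2*B 1 1*B 1 2*B 2 0*B 2 2 - A 0 2*A 1 0*A 2 0*B 0 1^2*B 1 0*B 1 2*B 2 1*B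 2 2 - A 0 2*A 1 0*A 2 0*B 0 0*B 0 2*B 1 1*B 1 2*B 2 1^2 + A 0 2*A 1 0*A 2 0*B 0 0*B 0 2*B 1 1^2*B 2 1*B 2 2 - A 0 1*A 1 2*A 2 2*B 0 1^2*B 1 0*B 1 2*B 2 0^2 + A 0 1*A 1 2*A 2 2*B 0 1^2*B 1 0^2*B 2 0*B 2 2 + A 0 1*A 1 2*A 2 2*B 0 0*B 0 2*B 1 1^2*B 2 0^2 - A 0 1*A 1 2*A 2 2*B 0 0*B 0 2*B 1 0^2*B 2 1^2 - A 0 1*A 1 2*A 2 2*B 0 0^2*B 1 1^2*B 2 0*B 2 2 + A 0 1*A 1 2*A 2 2*B 0 0^2*B 1 0*B 1 2*B 2 1^2 + A 0 1*A 1 2*A 2 1*B 0 1*B 0 2*B 1 0*B 1 2*B 2 0^2 - A 0 1*A 1 2*A 2 1*B 0 1*B 0 2*B 1 0^2*B 2 0*B 2 2 - A 0 1*A 1 2*A 2 1*B 0 0*B 0 2*B 1 1*B 1 2*B 2 0^2 + A 0 1*A 1 2*A 2 1*B 0 0*B 0 2*B 1 0^2*B 2 1*B 2 2 + A 0 1*A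 1 2*A 2 1*B 0 0^2*B 1 1*B 1 2*B 2 0*B 2 2 - A 0 1*A 1 2*A 2 1*B 0 0^2*B 1 0*B 1 2*B 2 1*B 2 2 - A 0 1*A 1 2*A 2 0*B 0 2^2*B 1 1^2*B 2 0^2 + A 0 1*A 1 2*A 2 0*B 0 2^2*B 1 0^2*B 2 1^2 + A 0 1*A 1 2*A 2 0*B 0 1*B 0 2*B 1 0*B 1 2*B 2 0*B 2 1 - A 0 1*A 1 2*A 2 0*B 0 1*B 0 2*B 1 0*B 1 1*B 2 0*B 2 2 + A 0 1*A 1 2*A 2 0*B 0 1^2*B 1 2^2*B 2 0^2 - A 0 1*A 1 2*A 2 0*B 0 1^2*B 1 0^2*B 2 2^2 - A 0 1*A 1 2*A 2 0*B 0 0*B 0 2*B 1 1*B 1 2*B 2 0*B 2 1 + A 0 1*A 1 2*A 2 0*B 0 0*B 0 2*B 1 0*B 1 1*B 2 1*B 2 2 + A 0 1*A 1 2*A 2 0*B 0 0*B 0 1*B 1 1*B 1 2*B 2 0*B 2 2 - A 0 1*A 1 2*A 2 0*B 0 0*B 0 1*B 1 0*B 1 2*B 2 1*B 2 2 - A 0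 1*A 1 2*A 2 0*B 0 0^2*B 1 2^2*B 2 1^2 + A 0 1*A 1 2*A 2 0*B 0 0^2*B 1 1^2*B 2 2^2 + A 0 1*A 1 1*A 2 2*B 0 1*B 0 2*B 1 0*B 1 2*B 2 0^2 - A 0 1*A 1 1*A 2 2*B 0 1*B 0 2*B 1 0^2*B 2 0*B 2 2 - A 0 1*A 1 1*A 2 2*B 0 0*B 0 2*B 1 1*B 1 2*B 2 0^2 + A 0 1*A 1 1*A 2 2*B 0 0*B 0 2*B 1 0^2*B 2 1*B 2 2 + A 0 1*A 1 1*A 2 2*B 0 0^2*B 1 1*B 1 2*B 2 0*B 2 2 - A 0 1*A 1 1*A 2 2*B 0 0^2*B 1 0*B 1 2*B 2 1*B 2 2 - A 0 1*A 1 1*A 2 1*B 0 2^2*B 1 0*B 1 2*B 2 0^2 + A 0 1*A 1 1*A 2 1*B 0 2^2*B 1 0^2*B 2 0*B 2 2 + A 0 1*A 1 1*A 2 1*B 0 0*B 0 2*B 1 2^2*B 2 0^2 - A 0 1*A 1 1*A 2 1*B 0 0*B 0 2*B 1 0^2*B 2 2^2 - A 0 1*A 1 1*A 2 1*B 0 0^2*B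 1 2^2*B 2 0*B 2 2 + A 0 1*A 1 1*A 2 1*B 0 0^2*B 1 0*B 1 2*B 2 2^2 + A 0 1*A 1 1*A 2 0*B 0 2^2*B 1 1*B 1 2*B 2 0^2 - A 0 1*A 1 1*A 2 0*B 0 2^2*B 1 0^2*B 2 1*B 2 2 - A 0 1*A 1 1*A 2 0*B 0 1*B 0 2*B 1 2^2*B 2 0^2 + A 0 1*A 1 1*A 2 0*B 0 1*B 0 2*B 1 0^2*B 2 2^2 + A 0 1*A 1 1*A 2 0*B 0 0^2*B 1 2^2*B 2 1*B 2 2 - A 0 1*A 1 1*A 2 0*B 0 0^2*B 1 1*B 1 2*B 2 2^2 - A 0 1*A 1 0*A 2 2*B 0 1*B 0 2*B 1 0*B 1 2*B 2 0*B 2 1 + A 0 1*A 1 0*A 2 2*B 0 1*B 0 2*B 1 0*B 1 1*B 2 0*B 2 2 + A 0 1*A 1 0*A 2 2*B 0 0*B 0 2*B 1 1*B 1 2*B 2 0*B 2 1 - A 0 1*A 1 0*A 2 2*B 0 0*B 0 2*B 1 0*B 1 1*B 2 1*B 2 2 - A 0 1*A 1 0*A 2 2*B 0 0*B 0 1*B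 1 1*B 1 2*B 2 0*B 2 2 + A 0 1*A 1 0*A 2 2*B 0 0*B 0 1*B 1 0*B 1 2*B 2 1*B 2 2 + A 0 1*A 1 0*A 2 1*B 0 2^2*B 1 0*B 1 2*B 2 0*B 2 1 - A 0 1*A 1 0*A 2 1*B 0 2^2*B 1 0*B 1 1*B 2 0*B 2 2 - A 0 1*A 1 0*A 2 1*B 0 0*B 0 2*B 1 2^2*B 2 0*B 2 1 + A 0 1*A 1 0*A 2 1*B 0 0*B 0 2*B 1 0*B 1 1*B 2 2^2 + A 0 1*A 1 0*A 2 1*B 0 0*B 0 1*B 1 2^2*B 2 0*B 2 2 - A 0 1*A 1 0*A 2 1*B 0 0*B 0 1*B 1 0*B 1 2*B 2 2^2 - A 0 1*A 1 0*A 2 0*B 0 2^2*B 1 1*B 1 2*B 2 0*B 2 1 + A 0 1*A 1 0*A 2 0*B 0 2^2*B 1 0*B 1 1*B 2 1*B 2 2 + A 0 1*A 1 0*A 2 0*B 0 1*B 0 2*B 1 2^2*B 2 0*B 2 1 - A 0 1*A 1 0*A 2 0*B 0 1*B 0 2*B 1 0*B 1 1*B 2 2^2 - A 0 1*A 1 0*A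 2 0*B 0 0*B 0 1*B 1 2^2*B 2 1*B 2 2 + A 0 1*A 1 0*A 2 0*B 0 0*B 0 1*B 1 1*B 1 2*B 2 2^2 + A 0 0*A 1 2*A 2 2*B 0 1^2*B 1 0*B 1 2*B 2 0*B 2 1 - A 0 0*A 1 2*A 2 2*B 0 1^2*B 1 0*B 1 1*B 2 0*B 2 2 - A 0 0*A 1 2*A 2 2*B 0 0*B 0 2*B 1 1^2*B 2 0*B 2 1 + A 0 0*A 1 2*A 2 2*B 0 0*B 0 2*B 1 0*B 1 1*B 2 1^2 + A 0 0*A 1 2*A 2 2*B 0 0*B 0 1*B 1 1^2*B 2 0*B 2 2 - A 0 0*A 1 2*A 2 2*B 0 0*B 0 1*B 1 0*B 1 2*B 2 1^2 - A 0 0*A 1 2*A 2 1*B 0 1*B 0 2*B 1 0*B 1 2*B 2 0*B 2 1 + A 0 0*A 1 2*A 2 1*B 0 1*B 0 2*B 1 0*B 1 1*B 2 0*B 2 2 + A 0 0*A 1 2*A 2 1*B 0 0*B 0 2*B 1 1*B 1 2*B 2 0*B 2 1 - A 0 0*A 1 2*A 2 1*B 0 0*B 0 2*B 1 0*B 1 1*B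 2 1*B 2 2 - A 0 0*A 1 2*A 2 1*B 0 0*B 0 1*B 1 1*B 1 2*B 2 0*B 2 2 + A 0 0*A 1 2*A 2 1*B 0 0*B 0 1*B 1 0*B 1 2*B 2 1*B 2 2 + A 0 0*A 1 2*A 2 0*B 0 2^2*B 1 1^2*B 2 0*B 2 1 - A 0 0*A 1 2*A 2 0*B 0 2^2*B 1 0*B 1 1*B 2 1^2 - A 0 0*A 1 2*A 2 0*B 0 1^2*B 1 2^2*B 2 0*B 2 1 + A 0 0*A 1 2*A 2 0*B 0 1^2*B 1 0*B 1 1*B 2 2^2 + A 0 0*A 1 2*A 2 0*B 0 0*B 0 1*B 1 2^2*B 2 1^2 - A 0 0*A 1 2*A 2 0*B 0 0*B 0 1*B 1 1^2*B 2 2^2 - A 0 0*A 1 1*A 2 2*B 0 1*B 0 2*B 1 0*B 1 2*B 2 0*B 2 1 + A 0 0*A 1 1*A 2 2*B 0 1*B 0 2*B 1 0*B 1 1*B 2 0*B 2 2 + A 0 0*A 1 1*A 2 2*B 0 0*B 0 2*B 1 1*B 1 2*B 2 0*B 2 1 - A 0 0*A 1 1*A 2 2*B 0 0*B 0 2*B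 1 0*B 1 1*B 2 1*B 2 2 - A 0 0*A 1 1*A 2 2*B 0 0*B 0 1*B 1 1*B 1 2*B 2 0*B 2 2 + A 0 0*A 1 1*A 2 2*B 0 0*B 0 1*B 1 0*B 1 2*B 2 1*B 2 2 + A 0 0*A 1 1*A 2 1*B 0 2^2*B 1 0*B 1 2*B 2 0*B 2 1 - A 0 0*A 1 1*A 2 1*B 0 2^2*B 1 0*B 1 1*B 2 0*B 2 2 - A 0 0*A 1 1*A 2 1*B 0 0*B 0 2*B 1 2^2*B 2 0*B 2 1 + A 0 0*A 1 1*A 2 1*B 0 0*B 0 2*B 1 0*B 1 1*B 2 2^2 + A 0 0*A 1 1*A 2 1*B 0 0*B 0 1*B 1 2^2*B 2 0*B 2 2 - A 0 0*A 1 1*A 2 1*B 0 0*B 0 1*B 1 0*B 1 2*B 2 2^2 - A 0 0*A 1 1*A 2 0*B 0 2^2*B 1 1*B 1 2*B 2 0*B 2 1 + A 0 0*A 1 1*A 2 0*B 0 2^2*B 1 0*B 1 1*B 2 1*B 2 2 + A 0 0*A 1 1*A 2 0*B 0 1*B 0 2*B 1 2^2*B 2 0*B 2 1 - A 0 0*A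 1 1*A 2 0*B 0 1*B 0 2*B 1 0*B 1 1*B 2 2^2 - A 0 0*A 1 1*A 2 0*B 0 0*B 0 1*B 1 2^2*B 2 1*B 2 2 + A 0 0*A 1 1*A 2 0*B 0 0*B 0 1*B 1 1*B 1 2*B 2 2^2 - A 0 0*A 1 0*A 2 2*B 0 1*B 0 2*B 1 1^2*B 2 0*B 2 2 + A 0 0*A 1 0*A 2 2*B 0 1*B 0 2*B 1 0*B 1 2*B 2 1^2 + A 0 0*A 1 0*A 2 2*B 0 1^2*B 1 1*B 1 2*B 2 0*B 2 2 - A 0 0*A 1 0*A 2 2*B 0 1^2*B 1 0*B 1 2*B 2 1*B 2 2 - A 0 0*A 1 0*A 2 2*B 0 0*B 0 2*B 1 1*B 1 2*B 2 1^2 + A 0 0*A 1 0*A 2 2*B 0 0*B 0 2*B 1 1^2*B 2 1*B 2 2 + A 0 0*A 1 0*A 2 1*B 0 2^2*B 1 1^2*B 2 0*B 2 2 - A 0 0*A 1 0*A 2 1*B 0 2^2*B 1 0*B 1 2*B 2 1^2 - A 0 0*A 1 0*A 2 1*B 0 1^2*B 1 2^2*B 2 0*B 2 2 + A 0 0*A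 1 0*A 2 1*B 0 1^2*B 1 0*B 1 2*B 2 2^2 + A 0 0*A 1 0*A 2 1*B 0 0*B 0 2*B 1 2^2*B 2 1^2 - A 0 0*A 1 0*A 2 1*B 0 0*B 0 2*B 1 1^2*B 2 2^2 + A 0 0*A 1 0*A 2 0*B 0 2^2*B 1 1*B 1 2*B 2 1^2 - A 0 0*A 1 0*A 2 0*B 0 2^2*B 1 1^2*B 2 1*B 2 2 - A 0 0*A 1 0*A 2 0*B 0 1*B 0 2*B 1 2^2*B 2 1^2 + A 0 0*A 1 0*A 2 0*B 0 1*B 0 2*B 1 1^2*B 2 2^2 + A 0 0*A 1 0*A 2 0*B 0 1^2*B 1 2^2*B 2 1*B 2 2 - A 0 0*A 1 0*A 2 0*B 0 1^2*B 1 1*B 1 2*B 2 2^2) * hA + (-A 0 2^2*A 1 1*A 1 2*A 2 1^2*B 0 0*B 1 0*B 2 0 + A 0 2^2*A 1 1*A 1 2*A 2 0*A 2 1*B 0 1*B 1 0*B 2 0 + A 0 2^2*A 1 1*A 1 2*A 2 0*A 2 1*B 0 0*B 1 1*B 2 0 + A 0 2^2*A 1 1*A 1 2*A 2 0*A 2 1*B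 0 0*B 1 0*B 2 1 + A 0 2^2*A 1 1^2*A 2 1*A 2 2*B 0 0*B 1 0*B 2 0 - A 0 2^2*A 1 1^2*A 2 0*A 2 1*B 0 2*B 1 0*B 2 0 - A 0 2^2*A 1 1^2*A 2 0*A 2 1*B 0 0*B 1 2*B 2 0 - A 0 2^2*A 1 1^2*A 2 0*A 2 1*B 0 0*B 1 0*B 2 2 - A 0 2^2*A 1 0*A 1 2*A 2 0*A 2 1*B 0 1*B 1 1*B 2 0 - A 0 2^2*A 1 0*A 1 2*A 2 0*A 2 1*B 0 1*B 1 0*B 2 1 - A 0 2^2*A 1 0*A 1 2*A 2 0*A 2 1*B 0 0*B 1 1*B 2 1 + A 0 2^2*A 1 0*A 1 2*A 2 0^2*B 0 1*B 1 1*B 2 1 - A 0 2^2*A 1 0*A 1 1*A 2 1*A 2 2*B 0 1*B 1 0*B 2 0 - A 0 2^2*A 1 0*A 1 1*A 2 1*A 2 2*B 0 0*B 1 1*B 2 0 - A 0 2^2*A 1 0*A 1 1*A 2 1*A 2 2*B 0 0*B 1 0*B 2 1 + A 0 2^2*A 1 0*A 1 1*A 2 1^2*B 0 2*B 1 0*B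 2 0 + A 0 2^2*A 1 0*A 1 1*A 2 1^2*B 0 0*B 1 2*B 2 0 + A 0 2^2*A 1 0*A 1 1*A 2 1^2*B 0 0*B 1 0*B 2 2 + A 0 2^2*A 1 0*A 1 1*A 2 0*A 2 1*B 0 2*B 1 1*B 2 0 + A 0 2^2*A 1 0*A 1 1*A 2 0*A 2 1*B 0 2*B 1 0*B 2 1 + A 0 2^2*A 1 0*A 1 1*A 2 0*A 2 1*B 0 1*B 1 2*B 2 0 + A 0 2^2*A 1 0*A 1 1*A 2 0*A 2 1*B 0 1*B 1 0*B 2 2 + A 0 2^2*A 1 0*A 1 1*A 2 0*A 2 1*B 0 0*B 1 2*B 2 1 + A 0 2^2*A 1 0*A 1 1*A 2 0*A 2 1*B 0 0*B 1 1*B 2 2 + A 0 2^2*A 1 0^2*A 2 1*A 2 2*B 0 1*B 1 1*B 2 0 + A 0 2^2*A 1 0^2*A 2 1*A 2 2*B 0 1*B 1 0*B 2 1 + A 0 2^2*A 1 0^2*A 2 1*A 2 2*B 0 0*B 1 1*B 2 1 - A 0 2^2*A 1 0^2*A 2 1^2*B 0 2*B 1 1*B 2 0 - A 0 2^2*A 1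 0^2*A 2 1^2*B 0 2*B 1 0*B 2 1 - A 0 2^2*A 1 0^2*A 2 1^2*B 0 1*B 1 2*B 2 0 - A 0 2^2*A 1 0^2*A 2 1^2*B 0 1*B 1 0*B 2 2 - A 0 2^2*A 1 0^2*A 2 1^2*B 0 0*B 1 2*B 2 1 - A 0 2^2*A 1 0^2*A 2 1^2*B 0 0*B 1 1*B 2 2 - A 0 2^2*A 1 0^2*A 2 0*A 2 2*B 0 1*B 1 1*B 2 1 + A 0 1*A 0 2*A 1 2^2*A 2 1^2*B 0 0*B 1 0*B 2 0 - A 0 1*A 0 2*A 1 2^2*A 2 0*A 2 1*B 0 1*B 1 0*B 2 0 - A 0 1*A 0 2*A 1 2^2*A 2 0*A 2 1*B 0 0*B 1 1*B 2 0 - A 0 1*A 0 2*A 1 2^2*A 2 0*A 2 1*B 0 0*B 1 0*B 2 1 - A 0 1*A 0 2*A 1 1*A 1 2*A 2 0*A 2 2*B 0 1*B 1 0*B 2 0 - A 0 1*A 0 2*A 1 1*A 1 2*A 2 0*A 2 2*B 0 0*B 1 1*B 2 0 - A 0 1*A 0 2*A 1 1*A 1 2*A 2 0*A 2 2*B 0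 0*B 1 0*B 2 1 + A 0 1*A 0 2*A 1 1*A 1 2*A 2 0*A 2 1*B 0 2*B 1 0*B 2 0 + A 0 1*A 0 2*A 1 1*A 1 2*A 2 0*A 2 1*B 0 0*B 1 2*B 2 0 + A 0 1*A 0 2*A 1 1*A 1 2*A 2 0*A 2 1*B 0 0*B 1 0*B 2 2 + A 0 1*A 0 2*A 1 1*A 1 2*A 2 0^2*B 0 2*B 1 1*B 2 0 + A 0 1*A 0 2*A 1 1*A 1 2*A 2 0^2*B 0 2*B 1 0*B 2 1 + A 0 1*A 0 2*A 1 1*A 1 2*A 2 0^2*B 0 1*B 1 2*B 2 0 + A 0 1*A 0 2*A 1 1*A 1 2*A 2 0^2*B 0 1*B 1 0*B 2 2 + A 0 1*A 0 2*A 1 1*A 1 2*A 2 0^2*B 0 0*B 1 2*B 2 1 + A 0 1*A 0 2*A 1 1*A 1 2*A 2 0^2*B 0 0*B 1 1*B 2 2 - A 0 1*A 0 2*A 1 1^2*A 2 2^2*B 0 0*B 1 0*B 2 0 + A 0 1*A 0 2*A 1 1^2*A 2 0*A 2 2*B 0 2*B 1 0*B 2 0 + A 0 1*A 0 2*A 1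 1^2*A 2 0*A 2 2*B 0 0*B 1 2*B 2 0 + A 0 1*A 0 2*A 1 1^2*A 2 0*A 2 2*B 0 0*B 1 0*B 2 2 - A 0 1*A 0 2*A 1 1^2*A 2 0^2*B 0 2*B 1 2*B 2 0 - A 0 1*A 0 2*A 1 1^2*A 2 0^2*B 0 2*B 1 0*B 2 2 - A 0 1*A 0 2*A 1 1^2*A 2 0^2*B 0 0*B 1 2*B 2 2 + A 0 1*A 0 2*A 1 0*A 1 2*A 2 1*A 2 2*B 0 1*B 1 0*B 2 0 + A 0 1*A 0 2*A 1 0*A 1 2*A 2 1*A 2 2*B 0 0*B 1 1*B 2 0 + A 0 1*A 0 2*A 1 0*A 1 2*A 2 1*A 2 2*B 0 0*B 1 0*B 2 1 - A 0 1*A 0 2*A 1 0*A 1 2*A 2 1^2*B 0 2*B 1 0*B 2 0 - A 0 1*A 0 2*A 1 0*A 1 2*A 2 1^2*B 0 0*B 1 2*B 2 0 - A 0 1*A 0 2*A 1 0*A 1 2*A 2 1^2*B 0 0*B 1 0*B 2 2 + A 0 1*A 0 2*A 1 0*A 1 2*A 2 0*A 2 2*B 0 1*B 1 1*B 2 0 +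 A 0 1*A 0 2*A 1 0*A 1 2*A 2 0*A 2 2*B 0 1*B 1 0*B 2 1 + A 0 1*A 0 2*A 1 0*A 1 2*A 2 0*A 2 2*B 0 0*B 1 1*B 2 1 - A 0 1*A 0 2*A 1 0*A 1 2*A 2 0*A 2 1*B 0 2*B 1 1*B 2 0 - A 0 1*A 0 2*A 1 0*A 1 2*A 2 0*A 2 1*B 0 2*B 1 0*B 2 1 - A 0 1*A 0 2*A 1 0*A 1 2*A 2 0*A 2 1*B 0 1*B 1 2*B 2 0 - A 0 1*A 0 2*A 1 0*A 1 2*A 2 0*A 2 1*B 0 1*B 1 0*B 2 2 - A 0 1*A 0 2*A 1 0*A 1 2*A 2 0*A 2 1*B 0 0*B 1 2*B 2 1 - A 0 1*A 0 2*A 1 0*A 1 2*A 2 0*A 2 1*B 0 0*B 1 1*B 2 2 - A 0 1*A 0 2*A 1 0*A 1 2*A 2 0^2*B 0 2*B 1 1*B 2 1 - A 0 1*A 0 2*A 1 0*A 1 2*A 2 0^2*B 0 1*B 1 2*B 2 1 - A 0 1*A 0 2*A 1 0*A 1 2*A 2 0^2*B 0 1*B 1 1*B 2 2 + A 0 1*A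 0 2*A 1 0*A 1 1*A 2 2^2*B 0 1*B 1 0*B 2 0 + A 0 1*A 0 2*A 1 0*A 1 1*A 2 2^2*B 0 0*B 1 1*B 2 0 + A 0 1*A 0 2*A 1 0*A 1 1*A 2 2^2*B 0 0*B 1 0*B 2 1 - A 0 1*A 0 2*A 1 0*A 1 1*A 2 1*A 2 2*B 0 2*B 1 0*B 2 0 - A 0 1*A 0 2*A 1 0*A 1 1*A 2 1*A 2 2*B 0 0*B 1 2*B 2 0 - A 0 1*A 0 2*A 1 0*A 1 1*A 2 1*A 2 2*B 0 0*B 1 0*B 2 2 - A 0 1*A 0 2*A 1 0*A 1 1*A 2 0*A 2 2*B 0 2*B 1 1*B 2 0 - A 0 1*A 0 2*A 1 0*A 1 1*A 2 0*A 2 2*B 0 2*B 1 0*B 2 1 - A 0 1*A 0 2*A 1 0*A 1 1*A 2 0*A 2 2*B 0 1*B 1 2*B 2 0 - A 0 1*A 0 2*A 1 0*A 1 1*A 2 0*A 2 2*B 0 1*B 1 0*B 2 2 - A 0 1*A 0 2*A 1 0*A 1 1*A 2 0*A 2 2*B 0 0*B 1 2*B 2 1 - A 0 1*A 0 2*A 1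 0*A 1 1*A 2 0*A 2 2*B 0 0*B 1 1*B 2 2 + A 0 1*A 0 2*A 1 0*A 1 1*A 2 0*A 2 1*B 0 2*B 1 2*B 2 0 + A 0 1*A 0 2*A 1 0*A 1 1*A 2 0*A 2 1*B 0 2*B 1 0*B 2 2 + A 0 1*A 0 2*A 1 0*A 1 1*A 2 0*A 2 1*B 0 0*B 1 2*B 2 2 + A 0 1*A 0 2*A 1 0*A 1 1*A 2 0^2*B 0 2*B 1 2*B 2 1 + A 0 1*A 0 2*A 1 0*A 1 1*A 2 0^2*B 0 2*B 1 1*B 2 2 + A 0 1*A 0 2*A 1 0*A 1 1*A 2 0^2*B 0 1*B 1 2*B 2 2 - A 0 1*A 0 2*A 1 0^2*A 2 2^2*B 0 1*B 1 1*B 2 0 - A 0 1*A 0 2*A 1 0^2*A 2 2^2*B 0 1*B 1 0*B 2 1 - A 0 1*A 0 2*A 1 0^2*A 2 2^2*B 0 0*B 1 1*B 2 1 + A 0 1*A 0 2*A 1 0^2*A 2 1*A 2 2*B 0 2*B 1 1*B 2 0 + A 0 1*A 0 2*A 1 0^2*A 2 1*A 2 2*B 0 2*B 1 0*B 2 1 +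 A 0 1*A 0 2*A 1 0^2*A 2 1*A 2 2*B 0 1*B 1 2*B 2 0 + A 0 1*A 0 2*A 1 0^2*A 2 1*A 2 2*B 0 1*B 1 0*B 2 2 + A 0 1*A 0 2*A 1 0^2*A 2 1*A 2 2*B 0 0*B 1 2*B 2 1 + A 0 1*A 0 2*A 1 0^2*A 2 1*A 2 2*B 0 0*B 1 1*B 2 2 + A 0 1*A 0 2*A 1 0^2*A 2 0*A 2 2*B 0 2*B 1 1*B 2 1 + A 0 1*A 0 2*A 1 0^2*A 2 0*A 2 2*B 0 1*B 1 2*B 2 1 + A 0 1*A 0 2*A 1 0^2*A 2 0*A 2 2*B 0 1*B 1 1*B 2 2 - A 0 1*A 0 2*A 1 0^2*A 2 0*A 2 1*B 0 2*B 1 2*B 2 1 - A 0 1*A 0 2*A 1 0^2*A 2 0*A 2 1*B 0 2*B 1 1*B 2 2 - A 0 1*A 0 2*A 1 0^2*A 2 0*A 2 1*B 0 1*B 1 2*B 2 2 - A 0 1^2*A 1 2^2*A 2 1*A 2 2*B 0 0*B 1 0*B 2 0 + A 0 1^2*A 1 2^2*A 2 0*A 2 2*B 0 1*B 1 0*B 2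 0 + A 0 1^2*A 1 2^2*A 2 0*A 2 2*B 0 0*B 1 1*B 2 0 + A 0 1^2*A 1 2^2*A 2 0*A 2 2*B 0 0*B 1 0*B 2 1 - A 0 1^2*A 1 2^2*A 2 0^2*B 0 2*B 1 1*B 2 0 - A 0 1^2*A 1 2^2*A 2 0^2*B 0 2*B 1 0*B 2 1 - A 0 1^2*A 1 2^2*A 2 0^2*B 0 1*B 1 2*B 2 0 - A 0 1^2*A 1 2^2*A 2 0^2*B 0 1*B 1 0*B 2 2 - A 0 1^2*A 1 2^2*A 2 0^2*B 0 0*B 1 2*B 2 1 - A 0 1^2*A 1 2^2*A 2 0^2*B 0 0*B 1 1*B 2 2 + A 0 1^2*A 1 1*A 1 2*A 2 2^2*B 0 0*B 1 0*B 2 0 - A 0 1^2*A 1 1*A 1 2*A 2 0*A 2 2*B 0 2*B 1 0*B 2 0 - A 0 1^2*A 1 1*A 1 2*A 2 0*A 2 2*B 0 0*B 1 2*B 2 0 - A 0 1^2*A 1 1*A 1 2*A 2 0*A 2 2*B 0 0*B 1 0*B 2 2 + A 0 1^2*A 1 1*A 1 2*A 2 0^2*B 0 2*B 1 2*B 2 0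 + A 0 1^2*A 1 1*A 1 2*A 2 0^2*B 0 2*B 1 0*B 2 2 + A 0 1^2*A 1 1*A 1 2*A 2 0^2*B 0 0*B 1 2*B 2 2 - A 0 1^2*A 1 0*A 1 2*A 2 2^2*B 0 1*B 1 0*B 2 0 - A 0 1^2*A 1 0*A 1 2*A 2 2^2*B 0 0*B 1 1*B 2 0 - A 0 1^2*A 1 0*A 1 2*A 2 2^2*B 0 0*B 1 0*B 2 1 + A 0 1^2*A 1 0*A 1 2*A 2 1*A 2 2*B 0 2*B 1 0*B 2 0 + A 0 1^2*A 1 0*A 1 2*A 2 1*A 2 2*B 0 0*B 1 2*B 2 0 + A 0 1^2*A 1 0*A 1 2*A 2 1*A 2 2*B 0 0*B 1 0*B 2 2 + A 0 1^2*A 1 0*A 1 2*A 2 0*A 2 2*B 0 2*B 1 1*B 2 0 + A 0 1^2*A 1 0*A 1 2*A 2 0*A 2 2*B 0 2*B 1 0*B 2 1 + A 0 1^2*A 1 0*A 1 2*A 2 0*A 2 2*B 0 1*B 1 2*B 2 0 + A 0 1^2*A 1 0*A 1 2*A 2 0*A 2 2*B 0 1*B 1 0*B 2 2 + A 0 1^2*A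 1 0*A 1 2*A 2 0*A 2 2*B 0 0*B 1 2*B 2 1 + A 0 1^2*A 1 0*A 1 2*A 2 0*A 2 2*B 0 0*B 1 1*B 2 2 - A 0 1^2*A 1 0*A 1 2*A 2 0*A 2 1*B 0 2*B 1 2*B 2 0 - A 0 1^2*A 1 0*A 1 2*A 2 0*A 2 1*B 0 2*B 1 0*B 2 2 - A 0 1^2*A 1 0*A 1 2*A 2 0*A 2 1*B 0 0*B 1 2*B 2 2 - A 0 1^2*A 1 0*A 1 1*A 2 0^2*B 0 2*B 1 2*B 2 2 + A 0 1^2*A 1 0^2*A 2 0*A 2 1*B 0 2*B 1 2*B 2 2 + A 0 0*A 0 2*A 1 2^2*A 2 0*A 2 1*B 0 1*B 1 1*B 2 0 + A 0 0*A 0 2*A 1 2^2*A 2 0*A 2 1*B 0 1*B 1 0*B 2 1 + A 0 0*A 0 2*A 1 2^2*A 2 0*A 2 1*B 0 0*B 1 1*B 2 1 - A 0 0*A 0 2*A 1 2^2*A 2 0^2*B 0 1*B 1 1*B 2 1 - A 0 0*A 0 2*A 1 1*A 1 2*A 2 0*A 2 1*B 0 2*B 1 1*B 2 0 - A 0 0*A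 0 2*A 1 1*A 1 2*A 2 0*A 2 1*B 0 2*B 1 0*B 2 1 - A 0 0*A 0 2*A 1 1*A 1 2*A 2 0*A 2 1*B 0 1*B 1 2*B 2 0 - A 0 0*A 0 2*A 1 1*A 1 2*A 2 0*A 2 1*B 0 1*B 1 0*B 2 2 - A 0 0*A 0 2*A 1 1*A 1 2*A 2 0*A 2 1*B 0 0*B 1 2*B 2 1 - A 0 0*A 0 2*A 1 1*A 1 2*A 2 0*A 2 1*B 0 0*B 1 1*B 2 2 + A 0 0*A 0 2*A 1 1^2*A 2 0*A 2 1*B 0 2*B 1 2*B 2 0 + A 0 0*A 0 2*A 1 1^2*A 2 0*A 2 1*B 0 2*B 1 0*B 2 2 + A 0 0*A 0 2*A 1 1^2*A 2 0*A 2 1*B 0 0*B 1 2*B 2 2 - A 0 0*A 0 2*A 1 0*A 1 2*A 2 1*A 2 2*B 0 1*B 1 1*B 2 0 - A 0 0*A 0 2*A 1 0*A 1 2*A 2 1*A 2 2*B 0 1*B 1 0*B 2 1 - A 0 0*A 0 2*A 1 0*A 1 2*A 2 1*A 2 2*B 0 0*B 1 1*B 2 1 + A 0 0*A 0 2*A 1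 0*A 1 2*A 2 1^2*B 0 2*B 1 1*B 2 0 + A 0 0*A 0 2*A 1 0*A 1 2*A 2 1^2*B 0 2*B 1 0*B 2 1 + A 0 0*A 0 2*A 1 0*A 1 2*A 2 1^2*B 0 1*B 1 2*B 2 0 + A 0 0*A 0 2*A 1 0*A 1 2*A 2 1^2*B 0 1*B 1 0*B 2 2 + A 0 0*A 0 2*A 1 0*A 1 2*A 2 1^2*B 0 0*B 1 2*B 2 1 + A 0 0*A 0 2*A 1 0*A 1 2*A 2 1^2*B 0 0*B 1 1*B 2 2 + A 0 0*A 0 2*A 1 0*A 1 2*A 2 0*A 2 1*B 0 2*B 1 1*B 2 1 + A 0 0*A 0 2*A 1 0*A 1 2*A 2 0*A 2 1*B 0 1*B 1 2*B 2 1 + A 0 0*A 0 2*A 1 0*A 1 2*A 2 0*A 2 1*B 0 1*B 1 1*B 2 2 - A 0 0*A 0 2*A 1 0*A 1 1*A 2 1^2*B 0 2*B 1 2*B 2 0 - A 0 0*A 0 2*A 1 0*A 1 1*A 2 1^2*B 0 2*B 1 0*B 2 2 - A 0 0*A 0 2*A 1 0*A 1 1*A 2 1^2*B 0 0*B 1 2*B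 2 2 - A 0 0*A 0 2*A 1 0*A 1 1*A 2 0*A 2 1*B 0 2*B 1 2*B 2 1 - A 0 0*A 0 2*A 1 0*A 1 1*A 2 0*A 2 1*B 0 2*B 1 1*B 2 2 - A 0 0*A 0 2*A 1 0*A 1 1*A 2 0*A 2 1*B 0 1*B 1 2*B 2 2 + A 0 0*A 0 2*A 1 0^2*A 2 2^2*B 0 1*B 1 1*B 2 1 - A 0 0*A 0 2*A 1 0^2*A 2 1*A 2 2*B 0 2*B 1 1*B 2 1 - A 0 0*A 0 2*A 1 0^2*A 2 1*A 2 2*B 0 1*B 1 2*B 2 1 - A 0 0*A 0 2*A 1 0^2*A 2 1*A 2 2*B 0 1*B 1 1*B 2 2 + A 0 0*A 0 2*A 1 0^2*A 2 1^2*B 0 2*B 1 2*B 2 1 + A 0 0*A 0 2*A 1 0^2*A 2 1^2*B 0 2*B 1 1*B 2 2 + A 0 0*A 0 2*A 1 0^2*A 2 1^2*B 0 1*B 1 2*B 2 2 - A 0 0*A 0 1*A 1 2^2*A 2 0*A 2 2*B 0 1*B 1 1*B 2 0 - A 0 0*A 0 1*A 1 2^2*A 2 0*A 2 2*B 0 1*B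 1 0*B 2 1 - A 0 0*A 0 1*A 1 2^2*A 2 0*A 2 2*B 0 0*B 1 1*B 2 1 + A 0 0*A 0 1*A 1 2^2*A 2 0*A 2 1*B 0 2*B 1 1*B 2 0 + A 0 0*A 0 1*A 1 2^2*A 2 0*A 2 1*B 0 2*B 1 0*B 2 1 + A 0 0*A 0 1*A 1 2^2*A 2 0*A 2 1*B 0 1*B 1 2*B 2 0 + A 0 0*A 0 1*A 1 2^2*A 2 0*A 2 1*B 0 1*B 1 0*B 2 2 + A 0 0*A 0 1*A 1 2^2*A 2 0*A 2 1*B 0 0*B 1 2*B 2 1 + A 0 0*A 0 1*A 1 2^2*A 2 0*A 2 1*B 0 0*B 1 1*B 2 2 + A 0 0*A 0 1*A 1 2^2*A 2 0^2*B 0 2*B 1 1*B 2 1 + A 0 0*A 0 1*A 1 2^2*A 2 0^2*B 0 1*B 1 2*B 2 1 + A 0 0*A 0 1*A 1 2^2*A 2 0^2*B 0 1*B 1 1*B 2 2 - A 0 0*A 0 1*A 1 1*A 1 2*A 2 0*A 2 1*B 0 2*B 1 2*B 2 0 - A 0 0*A 0 1*A 1 1*A 1 2*A 2 0*A 2 1*B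 0 2*B 1 0*B 2 2 - A 0 0*A 0 1*A 1 1*A 1 2*A 2 0*A 2 1*B 0 0*B 1 2*B 2 2 - A 0 0*A 0 1*A 1 1*A 1 2*A 2 0^2*B 0 2*B 1 2*B 2 1 - A 0 0*A 0 1*A 1 1*A 1 2*A 2 0^2*B 0 2*B 1 1*B 2 2 - A 0 0*A 0 1*A 1 1*A 1 2*A 2 0^2*B 0 1*B 1 2*B 2 2 + A 0 0*A 0 1*A 1 1^2*A 2 0^2*B 0 2*B 1 2*B 2 2 + A 0 0*A 0 1*A 1 0*A 1 2*A 2 2^2*B 0 1*B 1 1*B 2 0 + A 0 0*A 0 1*A 1 0*A 1 2*A 2 2^2*B 0 1*B 1 0*B 2 1 + A 0 0*A 0 1*A 1 0*A 1 2*A 2 2^2*B 0 0*B 1 1*B 2 1 - A 0 0*A 0 1*A 1 0*A 1 2*A 2 1*A 2 2*B 0 2*B 1 1*B 2 0 - A 0 0*A 0 1*A 1 0*A 1 2*A 2 1*A 2 2*B 0 2*B 1 0*B 2 1 - A 0 0*A 0 1*A 1 0*A 1 2*A 2 1*A 2 2*B 0 1*B 1 2*B 2 0 - A 0 0*A 0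 1*A 1 0*A 1 2*A 2 1*A 2 2*B 0 1*B 1 0*B 2 2 - A 0 0*A 0 1*A 1 0*A 1 2*A 2 1*A 2 2*B 0 0*B 1 2*B 2 1 - A 0 0*A 0 1*A 1 0*A 1 2*A 2 1*A 2 2*B 0 0*B 1 1*B 2 2 + A 0 0*A 0 1*A 1 0*A 1 2*A 2 1^2*B 0 2*B 1 2*B 2 0 + A 0 0*A 0 1*A 1 0*A 1 2*A 2 1^2*B 0 2*B 1 0*B 2 2 + A 0 0*A 0 1*A 1 0*A 1 2*A 2 1^2*B 0 0*B 1 2*B 2 2 - A 0 0*A 0 1*A 1 0*A 1 2*A 2 0*A 2 2*B 0 2*B 1 1*B 2 1 - A 0 0*A 0 1*A 1 0*A 1 2*A 2 0*A 2 2*B 0 1*B 1 2*B 2 1 - A 0 0*A 0 1*A 1 0*A 1 2*A 2 0*A 2 2*B 0 1*B 1 1*B 2 2 + A 0 0*A 0 1*A 1 0*A 1 2*A 2 0*A 2 1*B 0 2*B 1 2*B 2 1 + A 0 0*A 0 1*A 1 0*A 1 2*A 2 0*A 2 1*B 0 2*B 1 1*B 2 2 + A 0 0*A 0 1*A 1 0*A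 1 2*A 2 0*A 2 1*B 0 1*B 1 2*B 2 2 - A 0 0*A 0 1*A 1 0^2*A 2 1^2*B 0 2*B 1 2*B 2 2 + A 0 0^2*A 1 2^2*A 2 0*A 2 2*B 0 1*B 1 1*B 2 1 - A 0 0^2*A 1 2^2*A 2 0*A 2 1*B 0 2*B 1 1*B 2 1 - A 0 0^2*A 1 2^2*A 2 0*A 2 1*B 0 1*B 1 2*B 2 1 - A 0 0^2*A 1 2^2*A 2 0*A 2 1*B 0 1*B 1 1*B 2 2 + A 0 0^2*A 1 1*A 1 2*A 2 0*A 2 1*B 0 2*B 1 2*B 2 1 + A 0 0^2*A 1 1*A 1 2*A 2 0*A 2 1*B 0 2*B 1 1*B 2 2 + A 0 0^2*A 1 1*A 1 2*A 2 0*A 2 1*B 0 1*B 1 2*B 2 2 - A 0 0^2*A 1 1^2*A 2 0*A 2 1*B 0 2*B 1 2*B 2 2 - A 0 0^2*A 1 0*A 1 2*A 2 2^2*B 0 1*B 1 1*B 2 1 + A 0 0^2*A 1 0*A 1 2*A 2 1*A 2 2*B 0 2*B 1 1*B 2 1 + A 0 0^2*A 1 0*A 1 2*A 2 1*A 2 2*B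 0 1*B 1 2*B 2 1 + A 0 0^2*A 1 0*A 1 2*A 2 1*A 2 2*B 0 1*B 1 1*B 2 2 - A 0 0^2*A 1 0*A 1 2*A 2 1^2*B 0 2*B 1 2*B 2 1 - A 0 0^2*A 1 0*A 1 2*A 2 1^2*B 0 2*B 1 1*B 2 2 - A 0 0^2*A 1 0*A 1 2*A 2 1^2*B 0 1*B 1 2*B 2 2 + A 0 0^2*A 1 0*A 1 1*A 2 1^2*B 0 2*B 1 2*B 2 2) * hB

/-- **Pappus' theorem.** If `A1, A2, A3` are mutually distinct points on a line `lA`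
and `B1, B2, B3` mutually distinct points on a different line `lB`, all six points
distinct from the intersection point `lA ∩ lB`, then each of the three pairs of cross
lines consists of two distinct lines, the intersection points `C1, C2, C3` are well
defined, and they are collinear. -/
theorem pappus_theorem (lA lB : Pt) (hlA : lA ≠ 0) (hlB : lB ≠ 0)
    (hAB : ¬ projEq lA lB)
    (A B : Fin 3 → Pt)
    (hA0 : ∀ i, A i ≠ 0) (hB0 : ∀ i, B i ≠ 0)
    (hAon : ∀ i, onL lA (A i)) (hBon : ∀ i, onL lB (B i))
    (hAdist : ∀ i j, i ≠ j → ¬ projEq (A i) (A j))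
    (hBdist : ∀ i j, i ≠ j → ¬ projEq (B i) (B j))
    (hAS : ∀ i, ¬ projEq (cp lA lB) (A i))
    (hBS : ∀ i, ¬ projEq (cp lA lB) (B i)) :
    (cp (A 1) (B 2) ≠ 0 ∧ cp (A 2) (B 1) ≠ 0 ∧
      ¬ projEq (cp (A 1) (B 2)) (cp (A 2) (B 1))) ∧
    (cp (A 0) (B 2) ≠ 0 ∧ cp (A 2) (B 0) ≠ 0 ∧
      ¬ projEq (cp (A 0) (B 2)) (cp (A 2) (B 0))) ∧
    (cp (A 0) (B 1) ≠ 0 ∧ cp (A 1) (B 0) ≠ 0 ∧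
      ¬ projEq (cp (A 0) (B 1)) (cp (A 1) (B 0))) ∧
    cp (cp (A 1) (B 2)) (cp (A 2) (B 1)) ≠ 0 ∧
    cp (cp (A 0) (B 2)) (cp (A 2) (B 0)) ≠ 0 ∧
    cp (cp (A 0) (B 1)) (cp (A 1) (B 0)) ≠ 0 ∧
    Collin (cp (cp (A 1) (B 2)) (cp (A 2) (B 1)))
      (cp (cp (A 0) (B 2)) (cp (A 2) (B 0)))
      (cp (cp (A 0) (B 1)) (cp (A 1) (B 0))) := by
  -- intersection point of the two lines
  have hS0 : cp lA lB ≠ 0 := cp_ne_zero hlA hlB hAB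
  -- no A i lies on lB, no B j lies on lA
  have hAnotB : ∀ i, ¬ onL lB (A i) := fun i h =>
    hAS i (point_on_two_lines hlA hlB hAB (hA0 i) (hAon i) h)
  have hBnotA : ∀ j, ¬ onL lA (B j) := fun j h =>
    hBS j (point_on_two_lines hlA hlB hAB (hB0 j) h (hBon j))
  -- A i and B j are never projectively equal
  have hABne : ∀ i j, ¬ projEq (A i) (B j) := fun i j h =>
    hAnotB i (onL_projEq_pt (projEq_symm h) (hBon j))
  -- the cross lines are nonzero
  have hL0 : ∀ i j, cp (A i) (B j) ≠ 0 := fun i j =>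
    cp_ne_zero (hA0 i) (hB0 j) (hABne i j)
  -- two cross lines with distinct A-indices are never projectively equal
  have hLne : ∀ i k j m, i ≠ k → ¬ projEq (cp (A i) (B j)) (cp (A k) (B m)) := by
    intro i k j m hik h
    have hAkL : onL (cp (A i) (B j)) (A k) := by
      obtain ⟨t, ht, he⟩ := h
      have := onL_cp_left (A k) (B m)
      rw [he] at this
      unfold onL at this ⊢
      simp only [Pi.smul_apply, smul_eq_mul] at this
      have h2 : t * (cp (A i) (B j) 0 * A k 0 + cp (A i) (B j) 1 * A k 1 +
          cp (A i) (B j) 2 * A k 2) = 0 := by linear_combination this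
      rcases mul_eq_zero.mp h2 with h3 | h3
      · exact absurd h3 ht
      · exact h3
    have hBjL : onL (cp (A i) (B j)) (B j) := onL_cp_right _ _
    have hAiL : onL (cp (A i) (B j)) (A i) := onL_cp_left _ _
    by_cases hc : projEq lA (cp (A i) (B j))
    · exact hBnotA j (onL_projEq_line (projEq_symm hc) hBjL)
    · have p1 := point_on_two_lines hlA (hL0 i j) hc (hA0 i) (hAon i) hAiL
      have p2 := point_on_two_lines hlA (hL0 i j) hc (hA0 k) (hAon k) hAkL
      exact hAdist i k hik (projEq_trans (projEq_symm p1) p2)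
  -- collinearity of the A's and of the B's
  have hlA' : projEq (cp (A 0) (A 1)) lA :=
    point_on_two_lines (hA0 0) (hA0 1) (hAdist 0 1 (by decide)) hlA
      (onL_symm (hAon 0)) (onL_symm (hAon 1))
  have hdetA : det3 (A 0) (A 1) (A 2) = 0 := by
    rw [← onL_cp_iff]
    obtain ⟨t, ht, he⟩ := hlA'
    have h2 := hAon 2
    rw [he] at h2
    unfold onL at h2 ⊢
    simp only [Pi.smul_apply, smul_eq_mul] at h2
    have h3 : t * (cp (A 0) (A 1) 0 * A 2 0 + cp (A 0) (A 1) 1 * A 2 1 +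
        cp (A 0) (A 1) 2 * A 2 2) = 0 := by linear_combination h2
    rcases mul_eq_zero.mp h3 with h4 | h4
    · exact absurd h4 ht
    · exact h4
  have hlB' : projEq (cp (B 0) (B 1)) lB :=
    point_on_two_lines (hB0 0) (hB0 1) (hBdist 0 1 (by decide)) hlB
      (onL_symm (hBon 0)) (onL_symm (hBon 1))
  have hdetB : det3 (B 0) (B 1) (B 2) = 0 := by
    rw [← onL_cp_iff]
    obtain ⟨t, ht, he⟩ := hlB'
    have h2 := hBon 2
    rw [he] at h2
    unfold onL at h2 ⊢
    simp only [Pi.smul_apply, smul_eq_mul] at h2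
    have h3 : t * (cp (B 0) (B 1) 0 * B 2 0 + cp (B 0) (B 1) 1 * B 2 1 +
        cp (B 0) (B 1) 2 * B 2 2) = 0 := by linear_combination h2
    rcases mul_eq_zero.mp h3 with h4 | h4
    · exact absurd h4 ht
    · exact h4
  -- the three intersection points are nonzero
  have hC1 : cp (cp (A 1) (B 2)) (cp (A 2) (B 1)) ≠ 0 :=
    cp_ne_zero (hL0 1 2) (hL0 2 1) (hLne 1 2 2 1 (by decide))
  have hC2 : cp (cp (A 0) (B 2)) (cp (A 2) (B 0)) ≠ 0 :=
    cp_ne_zero (hL0 0 2) (hL0 2 0) (hLne 0 2 2 0 (by decide))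
  have hC3 : cp (cp (A 0) (B 1)) (cp (A 1) (B 0)) ≠ 0 :=
    cp_ne_zero (hL0 0 1) (hL0 1 0) (hLne 0 1 1 0 (by decide))
  -- C1 and C2 are projectively distinct
  have hC12 : ¬ projEq (cp (cp (A 1) (B 2)) (cp (A 2) (B 1)))
      (cp (cp (A 0) (B 2)) (cp (A 2) (B 0))) := by
    intro h
    set C1 := cp (cp (A 1) (B 2)) (cp (A 2) (B 1)) with hC1def
    set C2 := cp (cp (A 0) (B 2)) (cp (A 2) (B 0)) with hC2def
    -- C2 lies on L(A1,B2) (since C1 does) and on L(A0,B2)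
    have hC2on12 : onL (cp (A 1) (B 2)) C2 :=
      onL_projEq_pt h (onL_symm (onL_cp_left (cp (A 1) (B 2)) (cp (A 2) (B 1))))
    have hC2on02 : onL (cp (A 0) (B 2)) C2 :=
      onL_symm (onL_cp_left (cp (A 0) (B 2)) (cp (A 2) (B 0)))
    have hC2on20 : onL (cp (A 2) (B 0)) C2 :=
      onL_symm (onL_cp_right (cp (A 0) (B 2)) (cp (A 2) (B 0)))
    -- B2 also lies on both L(A1,B2) and L(A0,B2), which are distinct lines
    have hB2on12 : onL (cp (A 1) (B 2)) (B 2) := onL_cp_right _ _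
    have hB2on02 : onL (cp (A 0) (B 2)) (B 2) := onL_cp_right _ _
    have hne1202 : ¬ projEq (cp (A 1) (B 2)) (cp (A 0) (B 2)) :=
      hLne 1 0 2 2 (by decide)
    have pB2 := point_on_two_lines (hL0 1 2) (hL0 0 2) hne1202 (hB0 2) hB2on12 hB2on02
    have pC2 := point_on_two_lines (hL0 1 2) (hL0 0 2) hne1202 hC2 hC2on12 hC2on02
    have hB2C2 : projEq (B 2) C2 := projEq_trans (projEq_symm pB2) pC2
    -- hence B2 lies on L(A2,B0)
    have hB2on20 : onL (cp (A 2) (B 0)) (B 2) :=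
      onL_projEq_pt (projEq_symm hB2C2) hC2on20
    -- so B0, B2 both lie on L(A2,B0) and on lB, which are distinct lines
    have hB0on20 : onL (cp (A 2) (B 0)) (B 0) := onL_cp_right _ _
    have hne20lB : ¬ projEq (cp (A 2) (B 0)) lB := by
      intro hc
      exact hAnotB 2 (onL_projEq_line hc (onL_cp_left (A 2) (B 0)))
    have q0 := point_on_two_lines (hL0 2 0) hlB hne20lB (hB0 0) hB0on20 (hBon 0)
    have q2 := point_on_two_lines (hL0 2 0) hlB hne20lB (hB0 2) hB2on20 (hBon 2)
    exact hBdist 0 2 (by decide) (projEq_trans (projEq_symm q0) q2)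
  refine ⟨⟨hL0 1 2, hL0 2 1, hLne 1 2 2 1 (by decide)⟩,
    ⟨hL0 0 2, hL0 2 0, hLne 0 2 2 0 (by decide)⟩,
    ⟨hL0 0 1, hL0 1 0, hLne 0 1 1 0 (by decide)⟩,
    hC1, hC2, hC3, ?_⟩
  -- the Pappus line
  refine ⟨cp (cp (cp (A 1) (B 2)) (cp (A 2) (B 1))) (cp (cp (A 0) (B 2)) (cp (A 2) (B 0))),
    cp_ne_zero hC1 hC2 hC12, onL_cp_left _ _, onL_cp_right _ _, ?_⟩
  exact onL_cp_iff.mpr (detC_zero A B hdetA hdetB)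


end PappusPaper
end
end

section
/- The six Pappus lines have the following explicit equations: L_{C,id}: abx − y − (a−1)z = 0; L_{C,τ2}: a(1−b)x − y + z = 0; L_{C,τ3}: ax + (b−1)y − az = 0; L_{C,τ3²}: a(1−b)x + by − z = 0; L_{C,τ2τ3}: ax − by − (a−1)z = 0; L_{C,τ2τ3²}: abx + (1−b)y − az = 0. That is, for each permutation σ ∈ {id, τ2, τ3, τ3², τ2τ3, τ2τ3²}, the three points C_{1,σ}, C_{2,σ}, C_{3,σ} all satisfy the corresponding linear equation. -/
noncomputable section

namespace PappusPaper

/-- Explicit equations of the six Pappus lines: for each of the six permutations,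
the three points `C_{1,σ}, C_{2,σ}, C_{3,σ}` satisfy the corresponding linear
equation. -/
theorem pappus_lines_equations (a b : ℂ) (ha0 : a ≠ 0) (ha1 : a ≠ 1) (hb0 : b ≠ 0) (hb1 : b ≠ 1) :
    (∀ k, onL ![a * b, -1, -(a - 1)] (Cpt a b pid k)) ∧
    (∀ k, onL ![a * (1 - b), -1, 1] (Cpt a b tau2 k)) ∧
    (∀ k, onL ![a, b - 1, -a] (Cpt a b tau3 k)) ∧
    (∀ k, onL ![a * (1 - b), b, -1] (Cpt a b tau3sq k)) ∧
    (∀ k, onL ![a, -b, -(a - 1)] (Cpt a b tau2tau3 k)) ∧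
    (∀ k, onL ![a * b, 1 - b, -a] (Cpt a b tau2tau3sq k)) := by
  refine ⟨?_, ?_, ?_, ?_, ?_, ?_⟩ <;> intro k <;> fin_cases k <;>
    simp [onL, Cpt, pappusC, cp, ptA, ptB, pid, tau2, tau3, tau3sq, tau2tau3, tau2tau3sq,
      Matrix.cons_val_zero, Matrix.cons_val_one, Matrix.head_cons, Matrix.vecHead, Matrix.vecTail] <;> ring

end PappusPaper
end
end

section
/- The dual points of the six Pappus lines are L*_{C,id}=(ab:−1:1−a), L*_{C,τ3}=(a:b−1:−a), L*_{C,τ3²}=(a(1−b):b:−1), L*_{C,τ2}=(a(1−b):−1:1), L*_{C,τ2τ3}=(a:−b:1−a), L*_{C,τ2τ3²}=(ab:1−b:−a), and they lie by three on the two lines M1 and M2: the three points L*_{C,σ} with σ even (σ ∈ {id, τ3, τ3²}) lie on M1, and the three points L*_{C,σ} with σ odd (σ ∈ {τ2, τ2τ3, τ2τ3²}) lie on M2. -/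
noncomputable section

namespace PappusPaper

/-- The dual points of the six Pappus lines have the stated coordinates, and the
three dual points of the even Pappus lines lie on `M1` while the three dual points
of the odd Pappus lines lie on `M2`. -/
theorem dual_points_on_M1_M2 (a b : ℂ) (ha0 : a ≠ 0) (ha1 : a ≠ 1) (hb0 : b ≠ 0) (hb1 : b ≠ 1) :
    projEq ![a * b, -1, 1 - a] (LC a b pid) ∧
    projEq ![a, b - 1, -a] (LC a b tau3) ∧
    projEq ![a * (1 - b), b, -1] (LC a b tau3sq) ∧
    projEq ![a * (1 - b), -1, 1] (LC a b tau2) ∧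
    projEq ![a, -b, 1 - a] (LC a b tau2tau3) ∧
    projEq ![a * b, 1 - b, -a] (LC a b tau2tau3sq) ∧
    onL (M1 a b) (LC a b pid) ∧ onL (M1 a b) (LC a b tau3) ∧
    onL (M1 a b) (LC a b tau3sq) ∧
    onL (M2 a b) (LC a b tau2) ∧ onL (M2 a b) (LC a b tau2tau3) ∧
    onL (M2 a b) (LC a b tau2tau3sq) := by
  have hbb : -b ≠ 0 := neg_ne_zero.mpr hb0
  refine ⟨⟨-1, by norm_num, ?_⟩, ⟨1, one_ne_zero, ?_⟩, ⟨-b, hbb, ?_⟩,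
    ⟨1, one_ne_zero, ?_⟩, ⟨-b, hbb, ?_⟩, ⟨1, one_ne_zero, ?_⟩, ?_, ?_, ?_, ?_, ?_, ?_⟩ <;>
    first
    | (funext i; fin_cases i <;>
        simp [LC, pappusLine, pappusC, cp, ptA, ptB, pid, tau2, tau3, tau3sq,
          tau2tau3, tau2tau3sq, Matrix.smul_cons, Matrix.vecHead, Matrix.vecTail] <;> ring)
    | (simp [onL, M1, M2, LC, pappusLine, pappusC, cp, ptA, ptB, pid, tau2, tau3,
        tau3sq, tau2tau3, tau2tau3sq, Matrix.vecHead, Matrix.vecTail]; ring)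


end PappusPaper
end
end

section
/- For every permutation σ of {1,2,3}, the point S lies on the Pappus line L_{C,σ} if and only if [A1,A2;A3,S] = [B_{σ(1)},B_{σ(2)};B_{σ(3)},S]. -/
noncomputable section

namespace PappusPaper

lemma perm3_cases (σ : Equiv.Perm (Fin 3)) :
    ⇑σ = ![0,1,2] ∨ ⇑σ = ![1,0,2] ∨ ⇑σ = ![2,0,1] ∨ ⇑σ = ![1,2,0] ∨ ⇑σ = ![2,1,0] ∨ ⇑σ = ![0,2,1] := by
  revert σ; decide

lemma cr_eq' (O A B C D : Pt) (p q : ℂ)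
    (h2 : det3 O A C * det3 O B D = p) (h1 : det3 O A D * det3 O B C = q) :
    crossRatio O A B C D = p / q := by
  rw [crossRatio, h1, h2]

/-- For every permutation `σ`, the point `S` lies on the Pappus line `L_{C,σ}` iff
`[A1,A2;A3,S] = [B_{σ(1)},B_{σ(2)};B_{σ(3)},S]`. -/
theorem S_on_pappusLine_iff_crossRatio (a b : ℂ) (ha0 : a ≠ 0) (ha1 : a ≠ 1) (hb0 : b ≠ 0) (hb1 : b ≠ 1)
    (σ : Equiv.Perm (Fin 3))
    (O1 : Pt) (hO1 : ¬ onL lineA O1) (O2 : Pt) (hO2 : ¬ onL lineB O2) :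
    onL (LC a b ⇑σ) Spt ↔
      crossRatio O1 (ptA a 0) (ptA a 1) (ptA a 2) Spt =
        crossRatio O2 (ptB b (σ 0)) (ptB b (σ 1)) (ptB b (σ 2)) Spt := by

  have hu : O1 2 ≠ 0 := by
    intro hc; apply hO1
    simp only [onL, lineA, Matrix.cons_val_zero, Matrix.cons_val_one, Matrix.head_cons,
      Matrix.cons_val_two, Matrix.tail_cons]
    linear_combination hc
  have hv : O2 0 - O2 1 ≠ 0 := by
    intro hc; apply hO2
    simp only [onL, lineB, Matrix.cons_val_zero, Matrix.cons_val_one, Matrix.head_cons,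
      Matrix.cons_val_two, Matrix.tail_cons]
    linear_combination hc
  have hb1' : b - 1 ≠ 0 := sub_ne_zero.mpr hb1
  have hb1'' : (1 : ℂ) - b ≠ 0 := sub_ne_zero.mpr (Ne.symm hb1)
  have hA : crossRatio O1 (ptA a 0) (ptA a 1) (ptA a 2) Spt
      = ((1 - a) * O1 2 ^ 2) / (O1 2 ^ 2) := by
    apply cr_eq'
    · simp only [det3, ptA, Spt, Matrix.cons_val_zero, Matrix.cons_val_one, Matrix.head_cons,
        Matrix.cons_val_two, Matrix.tail_cons]; ring
    · simp only [det3, ptA, Spt, Matrix.cons_val_zero, Matrix.cons_val_one, Matrix.head_cons,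
        Matrix.cons_val_two, Matrix.tail_cons]; ring
  rcases perm3_cases σ with h | h | h | h | h | h
  · rw [h]
    simp only [Matrix.cons_val_zero, Matrix.cons_val_one, Matrix.head_cons, Matrix.cons_val_two, Matrix.tail_cons]
    have hB : crossRatio O2 (ptB b 0) (ptB b 1) (ptB b 2) Spt
        = ((b - 1) * (O2 0 - O2 1) ^ 2) / (b * (O2 0 - O2 1) ^ 2) := by
      apply cr_eq'
      · simp only [det3, ptB, Spt, Matrix.cons_val_zero, Matrix.cons_val_one, Matrix.head_cons, Matrix.cons_val_two, Matrix.tail_cons]; ring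
      · simp only [det3, ptB, Spt, Matrix.cons_val_zero, Matrix.cons_val_one, Matrix.head_cons, Matrix.cons_val_two, Matrix.tail_cons]; ring
    rw [hA, hB, div_eq_div_iff (pow_ne_zero 2 hu) (mul_ne_zero hb0 (pow_ne_zero 2 hv))]
    simp only [onL, LC, pappusLine, pappusC, cp, ptA, ptB, Spt, Matrix.cons_val_zero, Matrix.cons_val_one, Matrix.head_cons, Matrix.cons_val_two, Matrix.tail_cons]
    constructor
    · intro hh
      linear_combination (O1 2 ^ 2 * (O2 0 - O2 1) ^ 2) * hh
    · intro hh
      have h3 : O1 2 ^ 2 * ((O2 0 - O2 1) ^ 2 * (1 - a * b)) = 0 := by linear_combination hh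
      rcases mul_eq_zero.mp h3 with h4 | h4
      · exact absurd h4 (pow_ne_zero 2 hu)
      rcases mul_eq_zero.mp h4 with h5 | h5
      · exact absurd h5 (pow_ne_zero 2 hv)
      linear_combination h5
  · rw [h]
    simp only [Matrix.cons_val_zero, Matrix.cons_val_one, Matrix.head_cons, Matrix.cons_val_two, Matrix.tail_cons]
    have hB : crossRatio O2 (ptB b 1) (ptB b 0) (ptB b 2) Spt
        = (b * (O2 0 - O2 1) ^ 2) / ((b - 1) * (O2 0 - O2 1) ^ 2) := by
      apply cr_eq'
      · simp only [det3, ptB, Spt, Matrix.cons_val_zero, Matrix.cons_val_one, Matrix.head_cons, Matrix.cons_val_two, Matrix.tail_cons]; ring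
      · simp only [det3, ptB, Spt, Matrix.cons_val_zero, Matrix.cons_val_one, Matrix.head_cons, Matrix.cons_val_two, Matrix.tail_cons]; ring
    rw [hA, hB, div_eq_div_iff (pow_ne_zero 2 hu) (mul_ne_zero hb1' (pow_ne_zero 2 hv))]
    simp only [onL, LC, pappusLine, pappusC, cp, ptA, ptB, Spt, Matrix.cons_val_zero, Matrix.cons_val_one, Matrix.head_cons, Matrix.cons_val_two, Matrix.tail_cons]
    constructor
    · intro hh
      linear_combination (O1 2 ^ 2 * (O2 0 - O2 1) ^ 2) * hh
    · intro hh
      have h3 : O1 2 ^ 2 * ((O2 0 - O2 1) ^ 2 * (a - 1 - a * b)) = 0 := by linear_combination hh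
      rcases mul_eq_zero.mp h3 with h4 | h4
      · exact absurd h4 (pow_ne_zero 2 hu)
      rcases mul_eq_zero.mp h4 with h5 | h5
      · exact absurd h5 (pow_ne_zero 2 hv)
      linear_combination h5
  · rw [h]
    simp only [Matrix.cons_val_zero, Matrix.cons_val_one, Matrix.head_cons, Matrix.cons_val_two, Matrix.tail_cons]
    have hB : crossRatio O2 (ptB b 2) (ptB b 0) (ptB b 1) Spt
        = (-(b * (O2 0 - O2 1) ^ 2)) / (-((O2 0 - O2 1) ^ 2)) := by
      apply cr_eq'
      · simp only [det3, ptB, Spt, Matrix.cons_val_zero, Matrix.cons_val_one, Matrix.head_cons, Matrix.cons_val_two, Matrix.tail_cons]; ring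
      · simp only [det3, ptB, Spt, Matrix.cons_val_zero, Matrix.cons_val_one, Matrix.head_cons, Matrix.cons_val_two, Matrix.tail_cons]; ring
    rw [hA, hB, div_eq_div_iff (pow_ne_zero 2 hu) (neg_ne_zero.mpr (pow_ne_zero 2 hv))]
    simp only [onL, LC, pappusLine, pappusC, cp, ptA, ptB, Spt, Matrix.cons_val_zero, Matrix.cons_val_one, Matrix.head_cons, Matrix.cons_val_two, Matrix.tail_cons]
    constructor
    · intro hh
      linear_combination (O1 2 ^ 2 * (O2 0 - O2 1) ^ 2) * hh
    · intro hh
      have h3 : O1 2 ^ 2 * ((O2 0 - O2 1) ^ 2 * (a + b - 1)) = 0 := by linear_combination hh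
      rcases mul_eq_zero.mp h3 with h4 | h4
      · exact absurd h4 (pow_ne_zero 2 hu)
      rcases mul_eq_zero.mp h4 with h5 | h5
      · exact absurd h5 (pow_ne_zero 2 hv)
      linear_combination h5
  · rw [h]
    simp only [Matrix.cons_val_zero, Matrix.cons_val_one, Matrix.head_cons, Matrix.cons_val_two, Matrix.tail_cons]
    have hB : crossRatio O2 (ptB b 1) (ptB b 2) (ptB b 0) Spt
        = ((O2 0 - O2 1) ^ 2) / ((1 - b) * (O2 0 - O2 1) ^ 2) := by
      apply cr_eq'
      · simp only [det3, ptB, Spt, Matrix.cons_val_zero, Matrix.cons_val_one, Matrix.head_cons, Matrix.cons_val_two, Matrix.tail_cons]; ring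
      · simp only [det3, ptB, Spt, Matrix.cons_val_zero, Matrix.cons_val_one, Matrix.head_cons, Matrix.cons_val_two, Matrix.tail_cons]; ring
    rw [hA, hB, div_eq_div_iff (pow_ne_zero 2 hu) (mul_ne_zero hb1'' (pow_ne_zero 2 hv))]
    simp only [onL, LC, pappusLine, pappusC, cp, ptA, ptB, Spt, Matrix.cons_val_zero, Matrix.cons_val_one, Matrix.head_cons, Matrix.cons_val_two, Matrix.tail_cons]
    constructor
    · intro hh
      have h3 : b * (a * b - a - b) = 0 := by linear_combination hh
      have hg := (mul_eq_zero.mp h3).resolve_left hb0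
      linear_combination (O1 2 ^ 2 * (O2 0 - O2 1) ^ 2) * hg
    · intro hh
      have h3 : O1 2 ^ 2 * ((O2 0 - O2 1) ^ 2 * (a * b - a - b)) = 0 := by linear_combination hh
      rcases mul_eq_zero.mp h3 with h4 | h4
      · exact absurd h4 (pow_ne_zero 2 hu)
      rcases mul_eq_zero.mp h4 with h5 | h5
      · exact absurd h5 (pow_ne_zero 2 hv)
      linear_combination b * h5
  · rw [h]
    simp only [Matrix.cons_val_zero, Matrix.cons_val_one, Matrix.head_cons, Matrix.cons_val_two, Matrix.tail_cons]
    have hB : crossRatio O2 (ptB b 2) (ptB b 1) (ptB b 0) Spt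
        = ((1 - b) * (O2 0 - O2 1) ^ 2) / ((O2 0 - O2 1) ^ 2) := by
      apply cr_eq'
      · simp only [det3, ptB, Spt, Matrix.cons_val_zero, Matrix.cons_val_one, Matrix.head_cons, Matrix.cons_val_two, Matrix.tail_cons]; ring
      · simp only [det3, ptB, Spt, Matrix.cons_val_zero, Matrix.cons_val_one, Matrix.head_cons, Matrix.cons_val_two, Matrix.tail_cons]; ring
    rw [hA, hB, div_eq_div_iff (pow_ne_zero 2 hu) (pow_ne_zero 2 hv)]
    simp only [onL, LC, pappusLine, pappusC, cp, ptA, ptB, Spt, Matrix.cons_val_zero, Matrix.cons_val_one, Matrix.head_cons, Matrix.cons_val_two, Matrix.tail_cons]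
    constructor
    · intro hh
      have h3 : b * (b - a) = 0 := by linear_combination hh
      have hg := (mul_eq_zero.mp h3).resolve_left hb0
      linear_combination (O1 2 ^ 2 * (O2 0 - O2 1) ^ 2) * hg
    · intro hh
      have h3 : O1 2 ^ 2 * ((O2 0 - O2 1) ^ 2 * (b - a)) = 0 := by linear_combination hh
      rcases mul_eq_zero.mp h3 with h4 | h4
      · exact absurd h4 (pow_ne_zero 2 hu)
      rcases mul_eq_zero.mp h4 with h5 | h5
      · exact absurd h5 (pow_ne_zero 2 hv)
      linear_combination b * h5
  · rw [h]
    simp only [Matrix.cons_val_zero, Matrix.cons_val_one, Matrix.head_cons, Matrix.cons_val_two, Matrix.tail_cons]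
    have hB : crossRatio O2 (ptB b 0) (ptB b 2) (ptB b 1) Spt
        = (-((O2 0 - O2 1) ^ 2)) / (-(b * (O2 0 - O2 1) ^ 2)) := by
      apply cr_eq'
      · simp only [det3, ptB, Spt, Matrix.cons_val_zero, Matrix.cons_val_one, Matrix.head_cons, Matrix.cons_val_two, Matrix.tail_cons]; ring
      · simp only [det3, ptB, Spt, Matrix.cons_val_zero, Matrix.cons_val_one, Matrix.head_cons, Matrix.cons_val_two, Matrix.tail_cons]; ring
    rw [hA, hB, div_eq_div_iff (pow_ne_zero 2 hu) (neg_ne_zero.mpr (mul_ne_zero hb0 (pow_ne_zero 2 hv)))]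
    simp only [onL, LC, pappusLine, pappusC, cp, ptA, ptB, Spt, Matrix.cons_val_zero, Matrix.cons_val_one, Matrix.head_cons, Matrix.cons_val_two, Matrix.tail_cons]
    constructor
    · intro hh
      linear_combination (O1 2 ^ 2 * (O2 0 - O2 1) ^ 2) * hh
    · intro hh
      have h3 : O1 2 ^ 2 * ((O2 0 - O2 1) ^ 2 * (1 - b + a * b)) = 0 := by linear_combination hh
      rcases mul_eq_zero.mp h3 with h4 | h4
      · exact absurd h4 (pow_ne_zero 2 hu)
      rcases mul_eq_zero.mp h4 with h5 | h5
      · exact absurd h5 (pow_ne_zero 2 hv)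
      linear_combination h5

end PappusPaper
end
end

section
/- The point S lies on the Pappus line L_{C,σ} exactly under the following algebraic conditions on a and b: S ∈ L_{C,id} ⟺ ab = 1; S ∈ L_{C,τ2} ⟺ ab − a + 1 = 0; S ∈ L_{C,τ3} ⟺ a + b = 1; S ∈ L_{C,τ3²} ⟺ ab = a + b; S ∈ L_{C,τ2τ3} ⟺ a = b; S ∈ L_{C,τ2τ3²} ⟺ ab − b + 1 = 0. -/
noncomputable section

namespace PappusPaper

/-- The algebraic conditions on `a` and `b` under which `S` lies on each of the six
Pappus lines. -/
theorem S_on_pappusLine_conditions (a b : ℂ) (ha0 : a ≠ 0) (ha1 : a ≠ 1) (hb0 : b ≠ 0) (hb1 : b ≠ 1) :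
    (onL (LC a b pid) Spt ↔ a * b = 1) ∧
    (onL (LC a b tau2) Spt ↔ a * b - a + 1 = 0) ∧
    (onL (LC a b tau3) Spt ↔ a + b = 1) ∧
    (onL (LC a b tau3sq) Spt ↔ a * b = a + b) ∧
    (onL (LC a b tau2tau3) Spt ↔ a = b) ∧
    (onL (LC a b tau2tau3sq) Spt ↔ a * b - b + 1 = 0) := by

  refine ⟨?_, ?_, ?_, ?_, ?_, ?_⟩ <;>
    simp only [onL, LC, pappusLine, pappusC, cp, ptA, ptB, Spt, pid, tau2, tau3, tau3sq,
      tau2tau3, tau2tau3sq, Matrix.cons_val_zero, Matrix.cons_val_one, Matrix.head_cons,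
      Matrix.cons_val_two, Matrix.tail_cons, Matrix.head_fin_const, Matrix.cons_val_fin_one]
  · constructor
    · intro h; linear_combination -h
    · intro h; linear_combination -h
  · constructor
    · intro h; linear_combination -h
    · intro h; linear_combination -h
  · constructor
    · intro h; linear_combination h
    · intro h; linear_combination h
  · constructor
    · intro h
      have h2 : b * (a * b - (a + b)) = 0 := by linear_combination h
      rcases mul_eq_zero.mp h2 with h3 | h3
      · exact absurd h3 hb0
      · linear_combination h3
    · intro h; linear_combination b * h
  · constructor
    · intro h
      have h2 : b * (b - a) = 0 := by linear_combination h
      rcases mul_eq_zero.mp h2 with h3 | h3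
      · exact absurd h3 hb0
      · linear_combination -h3
    · intro h; linear_combination -b * h
  · constructor
    · intro h; linear_combination h
    · intro h; linear_combination h


end PappusPaper
end
end

section
/- If three pairwise distinct permutations σ of {1,2,3} satisfy S ∈ L_{C,σ}, then b² − b + 1 = 0. In particular, if a and b are real numbers (with a,b ∉ {0,1}), then at most two of the six permutations σ satisfy S ∈ L_{C,σ}. -/
noncomputable section

namespace PappusPaper

/-! ### Auxiliary lemmas -/

section Aux

variable (a b : ℂ)

lemma C0_pid : pappusC (ptA a) (ptB b) pid 0 = ![0, 1 - a, 1] := by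
  funext i; fin_cases i <;> simp [pappusC, cp, ptA, ptB, pid, Matrix.vecHead, Matrix.vecTail] <;> ring
lemma C1_pid : pappusC (ptA a) (ptB b) pid 1 = ![1, b, b] := by
  funext i; fin_cases i <;> simp [pappusC, cp, ptA, ptB, pid, Matrix.vecHead, Matrix.vecTail] <;> ring
lemma C0_tau2 : pappusC (ptA a) (ptB b) tau2 0 = ![1, b + a - a*b, b] := by
  funext i; fin_cases i <;> simp [pappusC, cp, ptA, ptB, tau2, Matrix.vecHead, Matrix.vecTail] <;> ring
lemma C1_tau2 : pappusC (ptA a) (ptB b) tau2 1 = ![0, 1, 1] := by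
  funext i; fin_cases i <;> simp [pappusC, cp, ptA, ptB, tau2, Matrix.vecHead, Matrix.vecTail] <;> ring
lemma C0_tau3 : pappusC (ptA a) (ptB b) tau3 0 = ![1, a, b] := by
  funext i; fin_cases i <;> simp [pappusC, cp, ptA, ptB, tau3, Matrix.vecHead, Matrix.vecTail] <;> ring
lemma C1_tau3 : pappusC (ptA a) (ptB b) tau3 1 = ![1, 0, 1] := by
  funext i; fin_cases i <;> simp [pappusC, cp, ptA, ptB, tau3, Matrix.vecHead, Matrix.vecTail] <;> ring
lemma C0_tau3sq : pappusC (ptA a) (ptB b) tau3sq 0 = ![b, 1 - a + a*b, b] := by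
  funext i; fin_cases i <;> simp [pappusC, cp, ptA, ptB, tau3sq, Matrix.vecHead, Matrix.vecTail] <;> ring
lemma C1_tau3sq : pappusC (ptA a) (ptB b) tau3sq 1 = ![0, 1, b] := by
  funext i; fin_cases i <;> simp [pappusC, cp, ptA, ptB, tau3sq, Matrix.vecHead, Matrix.vecTail] <;> ring
lemma C0_tau2tau3 : pappusC (ptA a) (ptB b) tau2tau3 0 = ![0, 1 - a, b] := by
  funext i; fin_cases i <;> simp [pappusC, cp, ptA, ptB, tau2tau3, Matrix.vecHead, Matrix.vecTail] <;> ring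
lemma C1_tau2tau3 : pappusC (ptA a) (ptB b) tau2tau3 1 = ![b, 1, b] := by
  funext i; fin_cases i <;> simp [pappusC, cp, ptA, ptB, tau2tau3, Matrix.vecHead, Matrix.vecTail] <;> ring
lemma C0_tau2tau3sq : pappusC (ptA a) (ptB b) tau2tau3sq 0 = ![1, a, 1] := by
  funext i; fin_cases i <;> simp [pappusC, cp, ptA, ptB, tau2tau3sq, Matrix.vecHead, Matrix.vecTail] <;> ring
lemma C1_tau2tau3sq : pappusC (ptA a) (ptB b) tau2tau3sq 1 = ![1, 0, b] := by
  funext i; fin_cases i <;> simp [pappusC, cp, ptA, ptB, tau2tau3sq, Matrix.vecHead, Matrix.vecTail] <;> ring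

lemma E_pid (h : onL (LC a b pid) Spt) : a * b = 1 := by
  rw [onL, LC, pappusLine, C0_pid, C1_pid] at h
  simp [cp, Spt, Matrix.vecHead, Matrix.vecTail] at h
  linear_combination -h
lemma E_tau2 (h : onL (LC a b tau2) Spt) : a * (1 - b) = 1 := by
  rw [onL, LC, pappusLine, C0_tau2, C1_tau2] at h
  simp [cp, Spt, Matrix.vecHead, Matrix.vecTail] at h
  linear_combination h
lemma E_tau3 (h : onL (LC a b tau3) Spt) : a = 1 - b := by
  rw [onL, LC, pappusLine, C0_tau3, C1_tau3] at h
  simp [cp, Spt, Matrix.vecHead, Matrix.vecTail] at h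
  linear_combination h
lemma E_tau3sq (hb0 : b ≠ 0) (h : onL (LC a b tau3sq) Spt) : a * (b - 1) = b := by
  rw [onL, LC, pappusLine, C0_tau3sq, C1_tau3sq] at h
  simp [cp, Spt, Matrix.vecHead, Matrix.vecTail] at h
  have h2 : b * (a * (b - 1) - b) = 0 := by linear_combination h
  have h3 := (mul_eq_zero.mp h2).resolve_left hb0
  linear_combination h3
lemma E_tau2tau3 (hb0 : b ≠ 0) (h : onL (LC a b tau2tau3) Spt) : a = b := by
  rw [onL, LC, pappusLine, C0_tau2tau3, C1_tau2tau3] at h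
  simp [cp, Spt, Matrix.vecHead, Matrix.vecTail] at h
  have h2 : b * (a - b) = 0 := by linear_combination -h
  have h3 := (mul_eq_zero.mp h2).resolve_left hb0
  linear_combination h3
lemma E_tau2tau3sq (h : onL (LC a b tau2tau3sq) Spt) : a * b = b - 1 := by
  rw [onL, LC, pappusLine, C0_tau2tau3sq, C1_tau2tau3sq] at h
  simp [cp, Spt, Matrix.vecHead, Matrix.vecTail] at h
  linear_combination h

/-- Pair lemmas: each of these pairs of conditions forces `b^2 - b + 1 = 0`. -/
lemma q13 (hb0 : b ≠ 0) (h1 : onL (LC a b pid) Spt) (h2 : onL (LC a b tau3) Spt) :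
    b ^ 2 - b + 1 = 0 := by
  have e1 := E_pid a b h1; have e2 := E_tau3 a b h2
  linear_combination b * e2 - e1
lemma q14 (hb0 : b ≠ 0) (h1 : onL (LC a b pid) Spt) (h2 : onL (LC a b tau3sq) Spt) :
    b ^ 2 - b + 1 = 0 := by
  have e1 := E_pid a b h1; have e2 := E_tau3sq a b hb0 h2
  linear_combination b * e1 - b * e2 - e1
lemma q25 (hb0 : b ≠ 0) (h1 : onL (LC a b tau2) Spt) (h2 : onL (LC a b tau2tau3) Spt) :
    b ^ 2 - b + 1 = 0 := by
  have e1 := E_tau2 a b h1; have e2 := E_tau2tau3 a b hb0 h2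
  linear_combination -e1 - (b - 1) * e2
lemma q26 (hb0 : b ≠ 0) (h1 : onL (LC a b tau2) Spt) (h2 : onL (LC a b tau2tau3sq) Spt) :
    b ^ 2 - b + 1 = 0 := by
  have e1 := E_tau2 a b h1; have e2 := E_tau2tau3sq a b h2
  have hab : a = b := by linear_combination e1 + e2
  linear_combination e2 - b * hab
lemma q34 (hb0 : b ≠ 0) (h1 : onL (LC a b tau3) Spt) (h2 : onL (LC a b tau3sq) Spt) :
    b ^ 2 - b + 1 = 0 := by
  have e1 := E_tau3 a b h1; have e2 := E_tau3sq a b hb0 h2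
  linear_combination (b - 1) * e1 - e2
lemma q56 (hb0 : b ≠ 0) (h1 : onL (LC a b tau2tau3) Spt) (h2 : onL (LC a b tau2tau3sq) Spt) :
    b ^ 2 - b + 1 = 0 := by
  have e1 := E_tau2tau3 a b hb0 h1; have e2 := E_tau2tau3sq a b h2
  linear_combination e2 - b * e1

set_option maxHeartbeats 2000000 in
lemma perm_cover (sg : Equiv.Perm (Fin 3)) :
    ⇑sg = pid ∨ ⇑sg = tau2 ∨ ⇑sg = tau3 ∨ ⇑sg = tau3sq ∨ ⇑sg = tau2tau3 ∨ ⇑sg = tau2tau3sq := by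
  revert sg; decide

lemma key (hb0 : b ≠ 0) (σ₁ σ₂ σ₃ : Equiv.Perm (Fin 3))
    (h12 : σ₁ ≠ σ₂) (h13 : σ₁ ≠ σ₃) (h23 : σ₂ ≠ σ₃)
    (h1 : onL (LC a b ⇑σ₁) Spt) (h2 : onL (LC a b ⇑σ₂) Spt) (h3 : onL (LC a b ⇑σ₃) Spt) :
    b ^ 2 - b + 1 = 0 := by
  rcases perm_cover σ₁ with e1|e1|e1|e1|e1|e1 <;>
    rcases perm_cover σ₂ with e2|e2|e2|e2|e2|e2 <;>
    rcases perm_cover σ₃ with e3|e3|e3|e3|e3|e3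
  · exact absurd (Equiv.coe_fn_injective (e1.trans e2.symm)) h12
  · exact absurd (Equiv.coe_fn_injective (e1.trans e2.symm)) h12
  · exact absurd (Equiv.coe_fn_injective (e1.trans e2.symm)) h12
  · exact absurd (Equiv.coe_fn_injective (e1.trans e2.symm)) h12
  · exact absurd (Equiv.coe_fn_injective (e1.trans e2.symm)) h12
  · exact absurd (Equiv.coe_fn_injective (e1.trans e2.symm)) h12
  · exact absurd (Equiv.coe_fn_injective (e1.trans e3.symm)) h13
  · exact absurd (Equiv.coe_fn_injective (e2.trans e3.symm)) h23
  · rw [e1] at h1; rw [e3] at h3; exact q13 a b hb0 h1 h3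
  · rw [e1] at h1; rw [e3] at h3; exact q14 a b hb0 h1 h3
  · rw [e2] at h2; rw [e3] at h3; exact q25 a b hb0 h2 h3
  · rw [e2] at h2; rw [e3] at h3; exact q26 a b hb0 h2 h3
  · exact absurd (Equiv.coe_fn_injective (e1.trans e3.symm)) h13
  · rw [e1] at h1; rw [e2] at h2; exact q13 a b hb0 h1 h2
  · exact absurd (Equiv.coe_fn_injective (e2.trans e3.symm)) h23
  · rw [e1] at h1; rw [e2] at h2; exact q13 a b hb0 h1 h2
  · rw [e1] at h1; rw [e2] at h2; exact q13 a b hb0 h1 h2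
  · rw [e1] at h1; rw [e2] at h2; exact q13 a b hb0 h1 h2
  · exact absurd (Equiv.coe_fn_injective (e1.trans e3.symm)) h13
  · rw [e1] at h1; rw [e2] at h2; exact q14 a b hb0 h1 h2
  · rw [e1] at h1; rw [e3] at h3; exact q13 a b hb0 h1 h3
  · exact absurd (Equiv.coe_fn_injective (e2.trans e3.symm)) h23
  · rw [e1] at h1; rw [e2] at h2; exact q14 a b hb0 h1 h2
  · rw [e1] at h1; rw [e2] at h2; exact q14 a b hb0 h1 h2
  · exact absurd (Equiv.coe_fn_injective (e1.trans e3.symm)) h13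
  · rw [e2] at h2; rw [e3] at h3; exact q25 a b hb0 h3 h2
  · rw [e1] at h1; rw [e3] at h3; exact q13 a b hb0 h1 h3
  · rw [e1] at h1; rw [e3] at h3; exact q14 a b hb0 h1 h3
  · exact absurd (Equiv.coe_fn_injective (e2.trans e3.symm)) h23
  · rw [e2] at h2; rw [e3] at h3; exact q56 a b hb0 h2 h3
  · exact absurd (Equiv.coe_fn_injective (e1.trans e3.symm)) h13
  · rw [e2] at h2; rw [e3] at h3; exact q26 a b hb0 h3 h2
  · rw [e1] at h1; rw [e3] at h3; exact q13 a b hb0 h1 h3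
  · rw [e1] at h1; rw [e3] at h3; exact q14 a b hb0 h1 h3
  · rw [e2] at h2; rw [e3] at h3; exact q56 a b hb0 h3 h2
  · exact absurd (Equiv.coe_fn_injective (e2.trans e3.symm)) h23
  · exact absurd (Equiv.coe_fn_injective (e2.trans e3.symm)) h23
  · exact absurd (Equiv.coe_fn_injective (e1.trans e3.symm)) h13
  · rw [e2] at h2; rw [e3] at h3; exact q13 a b hb0 h2 h3
  · rw [e2] at h2; rw [e3] at h3; exact q14 a b hb0 h2 h3
  · rw [e1] at h1; rw [e3] at h3; exact q25 a b hb0 h1 h3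
  · rw [e1] at h1; rw [e3] at h3; exact q26 a b hb0 h1 h3
  · exact absurd (Equiv.coe_fn_injective (e1.trans e2.symm)) h12
  · exact absurd (Equiv.coe_fn_injective (e1.trans e2.symm)) h12
  · exact absurd (Equiv.coe_fn_injective (e1.trans e2.symm)) h12
  · exact absurd (Equiv.coe_fn_injective (e1.trans e2.symm)) h12
  · exact absurd (Equiv.coe_fn_injective (e1.trans e2.symm)) h12
  · exact absurd (Equiv.coe_fn_injective (e1.trans e2.symm)) h12
  · rw [e2] at h2; rw [e3] at h3; exact q13 a b hb0 h3 h2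
  · exact absurd (Equiv.coe_fn_injective (e1.trans e3.symm)) h13
  · exact absurd (Equiv.coe_fn_injective (e2.trans e3.symm)) h23
  · rw [e2] at h2; rw [e3] at h3; exact q34 a b hb0 h2 h3
  · rw [e1] at h1; rw [e3] at h3; exact q25 a b hb0 h1 h3
  · rw [e1] at h1; rw [e3] at h3; exact q26 a b hb0 h1 h3
  · rw [e2] at h2; rw [e3] at h3; exact q14 a b hb0 h3 h2
  · exact absurd (Equiv.coe_fn_injective (e1.trans e3.symm)) h13
  · rw [e2] at h2; rw [e3] at h3; exact q34 a b hb0 h3 h2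
  · exact absurd (Equiv.coe_fn_injective (e2.trans e3.symm)) h23
  · rw [e1] at h1; rw [e3] at h3; exact q25 a b hb0 h1 h3
  · rw [e1] at h1; rw [e3] at h3; exact q26 a b hb0 h1 h3
  · rw [e1] at h1; rw [e2] at h2; exact q25 a b hb0 h1 h2
  · exact absurd (Equiv.coe_fn_injective (e1.trans e3.symm)) h13
  · rw [e1] at h1; rw [e2] at h2; exact q25 a b hb0 h1 h2
  · rw [e1] at h1; rw [e2] at h2; exact q25 a b hb0 h1 h2
  · exact absurd (Equiv.coe_fn_injective (e2.trans e3.symm)) h23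
  · rw [e1] at h1; rw [e2] at h2; exact q25 a b hb0 h1 h2
  · rw [e1] at h1; rw [e2] at h2; exact q26 a b hb0 h1 h2
  · exact absurd (Equiv.coe_fn_injective (e1.trans e3.symm)) h13
  · rw [e1] at h1; rw [e2] at h2; exact q26 a b hb0 h1 h2
  · rw [e1] at h1; rw [e2] at h2; exact q26 a b hb0 h1 h2
  · rw [e1] at h1; rw [e3] at h3; exact q25 a b hb0 h1 h3
  · exact absurd (Equiv.coe_fn_injective (e2.trans e3.symm)) h23
  · exact absurd (Equiv.coe_fn_injective (e2.trans e3.symm)) h23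
  · rw [e1] at h1; rw [e2] at h2; exact q13 a b hb0 h2 h1
  · exact absurd (Equiv.coe_fn_injective (e1.trans e3.symm)) h13
  · rw [e1] at h1; rw [e2] at h2; exact q13 a b hb0 h2 h1
  · rw [e1] at h1; rw [e2] at h2; exact q13 a b hb0 h2 h1
  · rw [e1] at h1; rw [e2] at h2; exact q13 a b hb0 h2 h1
  · rw [e1] at h1; rw [e3] at h3; exact q13 a b hb0 h3 h1
  · exact absurd (Equiv.coe_fn_injective (e2.trans e3.symm)) h23
  · exact absurd (Equiv.coe_fn_injective (e1.trans e3.symm)) h13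
  · rw [e1] at h1; rw [e3] at h3; exact q34 a b hb0 h1 h3
  · rw [e2] at h2; rw [e3] at h3; exact q25 a b hb0 h2 h3
  · rw [e2] at h2; rw [e3] at h3; exact q26 a b hb0 h2 h3
  · exact absurd (Equiv.coe_fn_injective (e1.trans e2.symm)) h12
  · exact absurd (Equiv.coe_fn_injective (e1.trans e2.symm)) h12
  · exact absurd (Equiv.coe_fn_injective (e1.trans e2.symm)) h12
  · exact absurd (Equiv.coe_fn_injective (e1.trans e2.symm)) h12
  · exact absurd (Equiv.coe_fn_injective (e1.trans e2.symm)) h12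
  · exact absurd (Equiv.coe_fn_injective (e1.trans e2.symm)) h12
  · rw [e1] at h1; rw [e3] at h3; exact q13 a b hb0 h3 h1
  · rw [e1] at h1; rw [e2] at h2; exact q34 a b hb0 h1 h2
  · exact absurd (Equiv.coe_fn_injective (e1.trans e3.symm)) h13
  · exact absurd (Equiv.coe_fn_injective (e2.trans e3.symm)) h23
  · rw [e1] at h1; rw [e2] at h2; exact q34 a b hb0 h1 h2
  · rw [e1] at h1; rw [e2] at h2; exact q34 a b hb0 h1 h2
  · rw [e1] at h1; rw [e3] at h3; exact q13 a b hb0 h3 h1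
  · rw [e2] at h2; rw [e3] at h3; exact q25 a b hb0 h3 h2
  · exact absurd (Equiv.coe_fn_injective (e1.trans e3.symm)) h13
  · rw [e1] at h1; rw [e3] at h3; exact q34 a b hb0 h1 h3
  · exact absurd (Equiv.coe_fn_injective (e2.trans e3.symm)) h23
  · rw [e2] at h2; rw [e3] at h3; exact q56 a b hb0 h2 h3
  · rw [e1] at h1; rw [e3] at h3; exact q13 a b hb0 h3 h1
  · rw [e2] at h2; rw [e3] at h3; exact q26 a b hb0 h3 h2
  · exact absurd (Equiv.coe_fn_injective (e1.trans e3.symm)) h13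
  · rw [e1] at h1; rw [e3] at h3; exact q34 a b hb0 h1 h3
  · rw [e2] at h2; rw [e3] at h3; exact q56 a b hb0 h3 h2
  · exact absurd (Equiv.coe_fn_injective (e2.trans e3.symm)) h23
  · exact absurd (Equiv.coe_fn_injective (e2.trans e3.symm)) h23
  · rw [e1] at h1; rw [e2] at h2; exact q14 a b hb0 h2 h1
  · rw [e2] at h2; rw [e3] at h3; exact q13 a b hb0 h2 h3
  · exact absurd (Equiv.coe_fn_injective (e1.trans e3.symm)) h13
  · rw [e1] at h1; rw [e2] at h2; exact q14 a b hb0 h2 h1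
  · rw [e1] at h1; rw [e2] at h2; exact q14 a b hb0 h2 h1
  · rw [e1] at h1; rw [e3] at h3; exact q14 a b hb0 h3 h1
  · exact absurd (Equiv.coe_fn_injective (e2.trans e3.symm)) h23
  · rw [e1] at h1; rw [e3] at h3; exact q34 a b hb0 h3 h1
  · exact absurd (Equiv.coe_fn_injective (e1.trans e3.symm)) h13
  · rw [e2] at h2; rw [e3] at h3; exact q25 a b hb0 h2 h3
  · rw [e2] at h2; rw [e3] at h3; exact q26 a b hb0 h2 h3
  · rw [e2] at h2; rw [e3] at h3; exact q13 a b hb0 h3 h2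
  · rw [e1] at h1; rw [e2] at h2; exact q34 a b hb0 h2 h1
  · exact absurd (Equiv.coe_fn_injective (e2.trans e3.symm)) h23
  · exact absurd (Equiv.coe_fn_injective (e1.trans e3.symm)) h13
  · rw [e1] at h1; rw [e2] at h2; exact q34 a b hb0 h2 h1
  · rw [e1] at h1; rw [e2] at h2; exact q34 a b hb0 h2 h1
  · exact absurd (Equiv.coe_fn_injective (e1.trans e2.symm)) h12
  · exact absurd (Equiv.coe_fn_injective (e1.trans e2.symm)) h12
  · exact absurd (Equiv.coe_fn_injective (e1.trans e2.symm)) h12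
  · exact absurd (Equiv.coe_fn_injective (e1.trans e2.symm)) h12
  · exact absurd (Equiv.coe_fn_injective (e1.trans e2.symm)) h12
  · exact absurd (Equiv.coe_fn_injective (e1.trans e2.symm)) h12
  · rw [e1] at h1; rw [e3] at h3; exact q14 a b hb0 h3 h1
  · rw [e2] at h2; rw [e3] at h3; exact q25 a b hb0 h3 h2
  · rw [e1] at h1; rw [e3] at h3; exact q34 a b hb0 h3 h1
  · exact absurd (Equiv.coe_fn_injective (e1.trans e3.symm)) h13
  · exact absurd (Equiv.coe_fn_injective (e2.trans e3.symm)) h23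
  · rw [e2] at h2; rw [e3] at h3; exact q56 a b hb0 h2 h3
  · rw [e1] at h1; rw [e3] at h3; exact q14 a b hb0 h3 h1
  · rw [e2] at h2; rw [e3] at h3; exact q26 a b hb0 h3 h2
  · rw [e1] at h1; rw [e3] at h3; exact q34 a b hb0 h3 h1
  · exact absurd (Equiv.coe_fn_injective (e1.trans e3.symm)) h13
  · rw [e2] at h2; rw [e3] at h3; exact q56 a b hb0 h3 h2
  · exact absurd (Equiv.coe_fn_injective (e2.trans e3.symm)) h23
  · exact absurd (Equiv.coe_fn_injective (e2.trans e3.symm)) h23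
  · rw [e1] at h1; rw [e3] at h3; exact q25 a b hb0 h3 h1
  · rw [e2] at h2; rw [e3] at h3; exact q13 a b hb0 h2 h3
  · rw [e2] at h2; rw [e3] at h3; exact q14 a b hb0 h2 h3
  · exact absurd (Equiv.coe_fn_injective (e1.trans e3.symm)) h13
  · rw [e1] at h1; rw [e3] at h3; exact q56 a b hb0 h1 h3
  · rw [e1] at h1; rw [e2] at h2; exact q25 a b hb0 h2 h1
  · exact absurd (Equiv.coe_fn_injective (e2.trans e3.symm)) h23
  · rw [e1] at h1; rw [e2] at h2; exact q25 a b hb0 h2 h1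
  · rw [e1] at h1; rw [e2] at h2; exact q25 a b hb0 h2 h1
  · exact absurd (Equiv.coe_fn_injective (e1.trans e3.symm)) h13
  · rw [e1] at h1; rw [e2] at h2; exact q25 a b hb0 h2 h1
  · rw [e2] at h2; rw [e3] at h3; exact q13 a b hb0 h3 h2
  · rw [e1] at h1; rw [e3] at h3; exact q25 a b hb0 h3 h1
  · exact absurd (Equiv.coe_fn_injective (e2.trans e3.symm)) h23
  · rw [e2] at h2; rw [e3] at h3; exact q34 a b hb0 h2 h3
  · exact absurd (Equiv.coe_fn_injective (e1.trans e3.symm)) h13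
  · rw [e1] at h1; rw [e3] at h3; exact q56 a b hb0 h1 h3
  · rw [e2] at h2; rw [e3] at h3; exact q14 a b hb0 h3 h2
  · rw [e1] at h1; rw [e3] at h3; exact q25 a b hb0 h3 h1
  · rw [e2] at h2; rw [e3] at h3; exact q34 a b hb0 h3 h2
  · exact absurd (Equiv.coe_fn_injective (e2.trans e3.symm)) h23
  · exact absurd (Equiv.coe_fn_injective (e1.trans e3.symm)) h13
  · rw [e1] at h1; rw [e3] at h3; exact q56 a b hb0 h1 h3
  · exact absurd (Equiv.coe_fn_injective (e1.trans e2.symm)) h12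
  · exact absurd (Equiv.coe_fn_injective (e1.trans e2.symm)) h12
  · exact absurd (Equiv.coe_fn_injective (e1.trans e2.symm)) h12
  · exact absurd (Equiv.coe_fn_injective (e1.trans e2.symm)) h12
  · exact absurd (Equiv.coe_fn_injective (e1.trans e2.symm)) h12
  · exact absurd (Equiv.coe_fn_injective (e1.trans e2.symm)) h12
  · rw [e1] at h1; rw [e2] at h2; exact q56 a b hb0 h1 h2
  · rw [e1] at h1; rw [e3] at h3; exact q25 a b hb0 h3 h1
  · rw [e1] at h1; rw [e2] at h2; exact q56 a b hb0 h1 h2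
  · rw [e1] at h1; rw [e2] at h2; exact q56 a b hb0 h1 h2
  · exact absurd (Equiv.coe_fn_injective (e1.trans e3.symm)) h13
  · exact absurd (Equiv.coe_fn_injective (e2.trans e3.symm)) h23
  · exact absurd (Equiv.coe_fn_injective (e2.trans e3.symm)) h23
  · rw [e1] at h1; rw [e3] at h3; exact q26 a b hb0 h3 h1
  · rw [e2] at h2; rw [e3] at h3; exact q13 a b hb0 h2 h3
  · rw [e2] at h2; rw [e3] at h3; exact q14 a b hb0 h2 h3
  · rw [e1] at h1; rw [e3] at h3; exact q56 a b hb0 h3 h1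
  · exact absurd (Equiv.coe_fn_injective (e1.trans e3.symm)) h13
  · rw [e1] at h1; rw [e2] at h2; exact q26 a b hb0 h2 h1
  · exact absurd (Equiv.coe_fn_injective (e2.trans e3.symm)) h23
  · rw [e1] at h1; rw [e2] at h2; exact q26 a b hb0 h2 h1
  · rw [e1] at h1; rw [e2] at h2; exact q26 a b hb0 h2 h1
  · rw [e2] at h2; rw [e3] at h3; exact q25 a b hb0 h2 h3
  · exact absurd (Equiv.coe_fn_injective (e1.trans e3.symm)) h13
  · rw [e2] at h2; rw [e3] at h3; exact q13 a b hb0 h3 h2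
  · rw [e1] at h1; rw [e3] at h3; exact q26 a b hb0 h3 h1
  · exact absurd (Equiv.coe_fn_injective (e2.trans e3.symm)) h23
  · rw [e2] at h2; rw [e3] at h3; exact q34 a b hb0 h2 h3
  · rw [e1] at h1; rw [e3] at h3; exact q56 a b hb0 h3 h1
  · exact absurd (Equiv.coe_fn_injective (e1.trans e3.symm)) h13
  · rw [e2] at h2; rw [e3] at h3; exact q14 a b hb0 h3 h2
  · rw [e1] at h1; rw [e3] at h3; exact q26 a b hb0 h3 h1
  · rw [e2] at h2; rw [e3] at h3; exact q34 a b hb0 h3 h2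
  · exact absurd (Equiv.coe_fn_injective (e2.trans e3.symm)) h23
  · rw [e1] at h1; rw [e3] at h3; exact q56 a b hb0 h3 h1
  · exact absurd (Equiv.coe_fn_injective (e1.trans e3.symm)) h13
  · rw [e1] at h1; rw [e2] at h2; exact q56 a b hb0 h2 h1
  · rw [e2] at h2; rw [e3] at h3; exact q25 a b hb0 h3 h2
  · rw [e1] at h1; rw [e2] at h2; exact q56 a b hb0 h2 h1
  · rw [e1] at h1; rw [e2] at h2; exact q56 a b hb0 h2 h1
  · exact absurd (Equiv.coe_fn_injective (e2.trans e3.symm)) h23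
  · exact absurd (Equiv.coe_fn_injective (e1.trans e3.symm)) h13
  · exact absurd (Equiv.coe_fn_injective (e1.trans e2.symm)) h12
  · exact absurd (Equiv.coe_fn_injective (e1.trans e2.symm)) h12
  · exact absurd (Equiv.coe_fn_injective (e1.trans e2.symm)) h12
  · exact absurd (Equiv.coe_fn_injective (e1.trans e2.symm)) h12
  · exact absurd (Equiv.coe_fn_injective (e1.trans e2.symm)) h12
  · exact absurd (Equiv.coe_fn_injective (e1.trans e2.symm)) h12

end Aux

/-- If three pairwise distinct permutations `σ` satisfy `S ∈ L_{C,σ}` then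
`b² − b + 1 = 0`; in particular, for real `a` and `b` at most two of the six
permutations `σ` satisfy `S ∈ L_{C,σ}`. -/
theorem at_most_two_pappus_lines_through_S (a b : ℂ) (ha0 : a ≠ 0) (ha1 : a ≠ 1) (hb0 : b ≠ 0) (hb1 : b ≠ 1) :
    ((∃ σ₁ σ₂ σ₃ : Equiv.Perm (Fin 3), σ₁ ≠ σ₂ ∧ σ₁ ≠ σ₃ ∧ σ₂ ≠ σ₃ ∧
        onL (LC a b ⇑σ₁) Spt ∧ onL (LC a b ⇑σ₂) Spt ∧ onL (LC a b ⇑σ₃) Spt) →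
      b ^ 2 - b + 1 = 0) ∧
    (a.im = 0 → b.im = 0 →
      ({σ : Equiv.Perm (Fin 3) | onL (LC a b ⇑σ) Spt}).ncard ≤ 2) := by
  have main : (∃ σ₁ σ₂ σ₃ : Equiv.Perm (Fin 3), σ₁ ≠ σ₂ ∧ σ₁ ≠ σ₃ ∧ σ₂ ≠ σ₃ ∧
      onL (LC a b ⇑σ₁) Spt ∧ onL (LC a b ⇑σ₂) Spt ∧ onL (LC a b ⇑σ₃) Spt) →
      b ^ 2 - b + 1 = 0 := by
    rintro ⟨σ₁, σ₂, σ₃, h12, h13, h23, h1, h2, h3⟩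
    exact key a b hb0 σ₁ σ₂ σ₃ h12 h13 h23 h1 h2 h3
  refine ⟨main, fun haim hbim => ?_⟩
  by_contra hcard
  push_neg at hcard
  rw [Set.two_lt_ncard (Set.toFinite _)] at hcard
  obtain ⟨σ₁, hm1, σ₂, hm2, σ₃, hm3, h12, h13, h23⟩ := hcard
  have hq : b ^ 2 - b + 1 = 0 := main ⟨σ₁, σ₂, σ₃, h12, h13, h23, hm1, hm2, hm3⟩
  have hre : b.re ^ 2 - b.re + 1 = 0 := by
    have := congrArg Complex.re hq
    simpa [Complex.sub_re, Complex.add_re, Complex.one_re, pow_two, Complex.mul_re, hbim]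
      using this
  nlinarith [sq_nonneg (2 * b.re - 1)]


end PappusPaper
end
end

section
/- Assume a and b are real with a,b ∉ {0,1}. Then there exist two distinct permutations σ1 ≠ σ2 of {1,2,3} such that S lies on both Pappus lines L_{C,σ1} and L_{C,σ2} if and only if the quadruples (A1,A2,A3,S) and (B1,B2,B3,S) are both harmonic, i.e. [A1,A2;A3,S] ∈ {−1, 1/2, 2} and [B1,B2;B3,S] ∈ {−1, 1/2, 2}. -/
noncomputable section

namespace PappusPaper

-- AUX LEMMAS (to be inserted before the theorem)
section Aux
variable {a b : ℂ}

lemma onS_pid : onL (LC a b pid) Spt ↔ a * b = 1 := by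
  simp only [onL, LC, pappusLine, pappusC, cp, ptA, ptB, Spt, pid,
    Matrix.cons_val_zero, Matrix.cons_val_one, Matrix.head_cons,
    Matrix.cons_val_two, Matrix.tail_cons]
  constructor <;> intro h
  · linear_combination (-1 : ℂ) * h
  · linear_combination (-1 : ℂ) * h

lemma onS_tau2 : onL (LC a b tau2) Spt ↔ a - a * b = 1 := by
  simp only [onL, LC, pappusLine, pappusC, cp, ptA, ptB, Spt, tau2,
    Matrix.cons_val_zero, Matrix.cons_val_one, Matrix.head_cons,
    Matrix.cons_val_two, Matrix.tail_cons]
  constructor <;> intro h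
  · linear_combination h
  · linear_combination h

lemma onS_tau3 : onL (LC a b tau3) Spt ↔ a + b = 1 := by
  simp only [onL, LC, pappusLine, pappusC, cp, ptA, ptB, Spt, tau3,
    Matrix.cons_val_zero, Matrix.cons_val_one, Matrix.head_cons,
    Matrix.cons_val_two, Matrix.tail_cons]
  constructor <;> intro h
  · linear_combination h
  · linear_combination h

lemma onS_tau3sq (hb0 : b ≠ 0) : onL (LC a b tau3sq) Spt ↔ a * b = a + b := by
  simp only [onL, LC, pappusLine, pappusC, cp, ptA, ptB, Spt, tau3sq,
    Matrix.cons_val_zero, Matrix.cons_val_one, Matrix.head_cons,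
    Matrix.cons_val_two, Matrix.tail_cons]
  constructor <;> intro h
  · have h2 : b * (a * b - a - b) = 0 := by linear_combination h
    rcases mul_eq_zero.mp h2 with h3 | h3
    · exact absurd h3 hb0
    · linear_combination h3
  · linear_combination b * h

lemma onS_tau2tau3 (hb0 : b ≠ 0) : onL (LC a b tau2tau3) Spt ↔ a = b := by
  simp only [onL, LC, pappusLine, pappusC, cp, ptA, ptB, Spt, tau2tau3,
    Matrix.cons_val_zero, Matrix.cons_val_one, Matrix.head_cons,
    Matrix.cons_val_two, Matrix.tail_cons]
  constructor <;> intro h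
  · have h2 : b * (a - b) = 0 := by linear_combination (-1 : ℂ) * h
    rcases mul_eq_zero.mp h2 with h3 | h3
    · exact absurd h3 hb0
    · linear_combination h3
  · linear_combination (-b : ℂ) * h

lemma onS_tau2tau3sq : onL (LC a b tau2tau3sq) Spt ↔ a * b - b = -1 := by
  simp only [onL, LC, pappusLine, pappusC, cp, ptA, ptB, Spt, tau2tau3sq,
    Matrix.cons_val_zero, Matrix.cons_val_one, Matrix.head_cons,
    Matrix.cons_val_two, Matrix.tail_cons]
  constructor <;> intro h
  · linear_combination h
  · linear_combination h

end Aux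

section Aux2

variable {a b : ℂ}

/-! ### Permutation enumeration -/

def σpid : Equiv.Perm (Fin 3) := 1
def σt2 : Equiv.Perm (Fin 3) := Equiv.swap 0 1
def σt3 : Equiv.Perm (Fin 3) := Equiv.swap 0 1 * Equiv.swap 0 2
def σt3sq : Equiv.Perm (Fin 3) := Equiv.swap 0 2 * Equiv.swap 0 1
def σt2t3 : Equiv.Perm (Fin 3) := Equiv.swap 0 2
def σt2t3sq : Equiv.Perm (Fin 3) := Equiv.swap 1 2

lemma coe_σpid : ⇑σpid = pid := by ext i; fin_cases i <;> decide
lemma coe_σt2 : ⇑σt2 = tau2 := by ext i; fin_cases i <;> decide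
lemma coe_σt3 : ⇑σt3 = tau3 := by ext i; fin_cases i <;> decide
lemma coe_σt3sq : ⇑σt3sq = tau3sq := by ext i; fin_cases i <;> decide
lemma coe_σt2t3 : ⇑σt2t3 = tau2tau3 := by ext i; fin_cases i <;> decide
lemma coe_σt2t3sq : ⇑σt2t3sq = tau2tau3sq := by ext i; fin_cases i <;> decide

lemma perm6 (σ : Equiv.Perm (Fin 3)) :
    ⇑σ = pid ∨ ⇑σ = tau2 ∨ ⇑σ = tau3 ∨ ⇑σ = tau3sq ∨ ⇑σ = tau2tau3 ∨ ⇑σ = tau2tau3sq := by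
  revert σ; decide

/-! ### Cross ratios -/

lemma crA (O1 : Pt) (hz : O1 2 ≠ 0) :
    crossRatio O1 (ptA a 0) (ptA a 1) (ptA a 2) Spt = 1 - a := by
  have h1 : det3 O1 (ptA a 0) (ptA a 2) = O1 2 := by
    simp only [det3, ptA, Matrix.cons_val_zero, Matrix.cons_val_one, Matrix.head_cons, Matrix.cons_val_two, Matrix.tail_cons]; ring
  have h2 : det3 O1 (ptA a 1) Spt = O1 2 * (1 - a) := by
    simp only [det3, ptA, Spt, Matrix.cons_val_zero, Matrix.cons_val_one, Matrix.head_cons, Matrix.cons_val_two, Matrix.tail_cons]; ring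
  have h3 : det3 O1 (ptA a 0) Spt = O1 2 := by
    simp only [det3, ptA, Spt, Matrix.cons_val_zero, Matrix.cons_val_one, Matrix.head_cons, Matrix.cons_val_two, Matrix.tail_cons]; ring
  have h4 : det3 O1 (ptA a 1) (ptA a 2) = O1 2 := by
    simp only [det3, ptA, Matrix.cons_val_zero, Matrix.cons_val_one, Matrix.head_cons, Matrix.cons_val_two, Matrix.tail_cons]; ring
  rw [crossRatio, h1, h2, h3, h4]
  field_simp

lemma crB (O2 : Pt) (hw : O2 0 - O2 1 ≠ 0) (hb0 : b ≠ 0) :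
    crossRatio O2 (ptB b 0) (ptB b 1) (ptB b 2) Spt = (b - 1) / b := by
  have h1 : det3 O2 (ptB b 0) (ptB b 2) = (O2 0 - O2 1) * (1 - b) := by
    simp only [det3, ptB, Matrix.cons_val_zero, Matrix.cons_val_one, Matrix.head_cons, Matrix.cons_val_two, Matrix.tail_cons]; ring
  have h2 : det3 O2 (ptB b 1) Spt = -(O2 0 - O2 1) := by
    simp only [det3, ptB, Spt, Matrix.cons_val_zero, Matrix.cons_val_one, Matrix.head_cons, Matrix.cons_val_two, Matrix.tail_cons]; ring
  have h3 : det3 O2 (ptB b 0) Spt = -b * (O2 0 - O2 1) := by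
    simp only [det3, ptB, Spt, Matrix.cons_val_zero, Matrix.cons_val_one, Matrix.head_cons, Matrix.cons_val_two, Matrix.tail_cons]; ring
  have h4 : det3 O2 (ptB b 1) (ptB b 2) = -(O2 0 - O2 1) := by
    simp only [det3, ptB, Matrix.cons_val_zero, Matrix.cons_val_one, Matrix.head_cons, Matrix.cons_val_two, Matrix.tail_cons]; ring
  rw [crossRatio, h1, h2, h3, h4,
    div_eq_div_iff (mul_ne_zero (mul_ne_zero (neg_ne_zero.mpr hb0) hw) (neg_ne_zero.mpr hw)) hb0]
  ring

lemma memA (ha0 : a ≠ 0) :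
    (1 - a ∈ ({-1, 1 / 2, 2} : Set ℂ)) ↔ (a = 2 ∨ a = 1/2 ∨ a = -1) := by
  simp only [Set.mem_insert_iff, Set.mem_singleton_iff]
  constructor <;> rintro (h | h | h)
  · exact Or.inl (by linear_combination -h)
  · exact Or.inr (Or.inl (by linear_combination -h))
  · exact Or.inr (Or.inr (by linear_combination -h))
  · exact Or.inl (by linear_combination -h)
  · exact Or.inr (Or.inl (by linear_combination -h))
  · exact Or.inr (Or.inr (by linear_combination -h))

lemma memB (hb0 : b ≠ 0) :
    ((b - 1) / b ∈ ({-1, 1 / 2, 2} : Set ℂ)) ↔ (b = 1/2 ∨ b = 2 ∨ b = -1) := by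
  simp only [Set.mem_insert_iff, Set.mem_singleton_iff,
    div_eq_iff hb0]
  constructor <;> rintro (h | h | h)
  · exact Or.inl (by linear_combination (1/2 : ℂ) * h)
  · exact Or.inr (Or.inl (by linear_combination (2 : ℂ) * h))
  · exact Or.inr (Or.inr (by linear_combination -h))
  · exact Or.inl (by linear_combination (2 : ℂ) * h)
  · exact Or.inr (Or.inl (by linear_combination (1/2 : ℂ) * h))
  · exact Or.inr (Or.inr (by linear_combination -h))

/-! ### Pair analysis -/

/-- No real root of `x² − x + 1`. -/
lemma noRR (x : ℂ) (hx : x.im = 0) (h : x ^ 2 - x + 1 = 0) : False := by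
  have hre : x = (x.re : ℂ) := by
    apply Complex.ext <;> simp [hx]
  rw [hre] at h
  have h2 : (x.re) ^ 2 - x.re + 1 = 0 := by exact_mod_cast h
  nlinarith [sq_nonneg (x.re - 1/2)]

def Ccl (a b : ℂ) : Prop := (a = 2 ∨ a = 1/2 ∨ a = -1) ∧ (b = 1/2 ∨ b = 2 ∨ b = -1)

lemma L12 (e1 : a * b = 1) (e2 : a - a * b = 1) : Ccl a b := by
  have ha : a = 2 := by linear_combination e2 + e1
  exact ⟨Or.inl ha, Or.inl (by linear_combination (1/2 : ℂ) * e1 - (b/2) * ha)⟩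

lemma L13 (haRe : a.im = 0) (e1 : a * b = 1) (e3 : a + b = 1) : False :=
  noRR a haRe (by linear_combination -e1 + a * e3)

lemma L14 (haRe : a.im = 0) (e1 : a * b = 1) (e4 : a * b = a + b) : False :=
  L13 haRe e1 (by linear_combination e1 - e4)

lemma L15 (ha1 : a ≠ 1) (e1 : a * b = 1) (e5 : a = b) : Ccl a b := by
  have hsq : (a - 1) * (a + 1) = 0 := by linear_combination e1 + a * e5
  rcases mul_eq_zero.mp hsq with h | h
  · exact absurd (sub_eq_zero.mp h) ha1
  · have ha : a = -1 := by linear_combination h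
    exact ⟨Or.inr (Or.inr ha), Or.inr (Or.inr (by linear_combination -e5 + ha))⟩

lemma L16 (e1 : a * b = 1) (e6 : a * b - b = -1) : Ccl a b := by
  have hb : b = 2 := by linear_combination e1 - e6
  exact ⟨Or.inr (Or.inl (by linear_combination (1/2 : ℂ) * e1 - (a/2) * hb)),
    Or.inr (Or.inl hb)⟩

lemma L23 (ha1 : a ≠ 1) (e2 : a - a * b = 1) (e3 : a + b = 1) : Ccl a b := by
  have hsq : (a - 1) * (a + 1) = 0 := by linear_combination e2 + a * e3
  rcases mul_eq_zero.mp hsq with h | h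
  · exact absurd (sub_eq_zero.mp h) ha1
  · have ha : a = -1 := by linear_combination h
    exact ⟨Or.inr (Or.inr ha), Or.inr (Or.inl (by linear_combination e3 - ha))⟩

lemma L24 (e2 : a - a * b = 1) (e4 : a * b = a + b) : Ccl a b := by
  have hb : b = -1 := by linear_combination -e2 - e4
  exact ⟨Or.inr (Or.inl (by linear_combination (1/2 : ℂ) * e2 + (a/2) * hb)),
    Or.inr (Or.inr hb)⟩

lemma L25 (haRe : a.im = 0) (e2 : a - a * b = 1) (e5 : a = b) : False :=
  noRR a haRe (by linear_combination -e2 + a * e5)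

lemma L26 (haRe : a.im = 0) (e2 : a - a * b = 1) (e6 : a * b - b = -1) : False :=
  L25 haRe e2 (by linear_combination e2 + e6)

lemma L34 (haRe : a.im = 0) (e3 : a + b = 1) (e4 : a * b = a + b) : False :=
  L13 haRe (by linear_combination e3 + e4) e3

lemma L35 (e3 : a + b = 1) (e5 : a = b) : Ccl a b :=
  ⟨Or.inr (Or.inl (by linear_combination (1/2 : ℂ) * e3 + (1/2 : ℂ) * e5)),
    Or.inl (by linear_combination (1/2 : ℂ) * e3 - (1/2 : ℂ) * e5)⟩

lemma L36 (ha0 : a ≠ 0) (e3 : a + b = 1) (e6 : a * b - b = -1) : Ccl a b := by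
  have hsq : a * (a - 2) = 0 := by linear_combination (a - 1) * e3 - e6
  rcases mul_eq_zero.mp hsq with h | h
  · exact absurd h ha0
  · have ha : a = 2 := sub_eq_zero.mp (by linear_combination h)
    exact ⟨Or.inl ha, Or.inr (Or.inr (by linear_combination e3 - ha))⟩

lemma L45 (ha0 : a ≠ 0) (e4 : a * b = a + b) (e5 : a = b) : Ccl a b := by
  have hsq : a * (a - 2) = 0 := by linear_combination e4 + (a - 1) * e5
  rcases mul_eq_zero.mp hsq with h | h
  · exact absurd h ha0
  · have ha : a = 2 := sub_eq_zero.mp (by linear_combination h)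
    exact ⟨Or.inl ha, Or.inr (Or.inl (by linear_combination -e5 + ha))⟩

lemma L46 (e4 : a * b = a + b) (e6 : a * b - b = -1) : Ccl a b := by
  have ha : a = -1 := by linear_combination e6 - e4
  exact ⟨Or.inr (Or.inr ha), Or.inl (by linear_combination (-1/2 : ℂ) * e6 + (b/2) * ha)⟩

lemma L56 (haRe : a.im = 0) (e5 : a = b) (e6 : a * b - b = -1) : False :=
  noRR a haRe (by linear_combination e6 + (a - 1) * e5)

end Aux2

/-- For real `a` and `b` (with `a, b ∉ {0,1}`): two distinct Pappus lines pass
through `S` iff the quadruples `(A1,A2,A3,S)` and `(B1,B2,B3,S)` are both harmonic. -/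
theorem two_lines_through_S_iff_harmonic (a b : ℂ) (ha0 : a ≠ 0) (ha1 : a ≠ 1) (hb0 : b ≠ 0) (hb1 : b ≠ 1)
    (haRe : a.im = 0) (hbRe : b.im = 0)
    (O1 : Pt) (hO1 : ¬ onL lineA O1) (O2 : Pt) (hO2 : ¬ onL lineB O2) :
    (∃ σ₁ σ₂ : Equiv.Perm (Fin 3), σ₁ ≠ σ₂ ∧
        onL (LC a b ⇑σ₁) Spt ∧ onL (LC a b ⇑σ₂) Spt) ↔
    (crossRatio O1 (ptA a 0) (ptA a 1) (ptA a 2) Spt ∈ ({-1, 1 / 2, 2} : Set ℂ) ∧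
      crossRatio O2 (ptB b 0) (ptB b 1) (ptB b 2) Spt ∈ ({-1, 1 / 2, 2} : Set ℂ)) := by
  have hz : O1 2 ≠ 0 := by
    intro h
    apply hO1
    simp only [onL, lineA, Matrix.cons_val_zero, Matrix.cons_val_one, Matrix.head_cons,
      Matrix.cons_val_two, Matrix.tail_cons]
    linear_combination h
  have hw : O2 0 - O2 1 ≠ 0 := by
    intro h
    apply hO2
    simp only [onL, lineB, Matrix.cons_val_zero, Matrix.cons_val_one, Matrix.head_cons,
      Matrix.cons_val_two, Matrix.tail_cons]
    linear_combination h
  rw [crA O1 hz, crB O2 hw hb0, memA ha0, memB hb0]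
  constructor
  · rintro ⟨σ1, σ2, hne, hs1, hs2⟩
    have hfne : ⇑σ1 ≠ ⇑σ2 := fun h => hne (Equiv.coe_fn_injective h)
    rcases perm6 σ1 with h1 | h1 | h1 | h1 | h1 | h1 <;>
      rcases perm6 σ2 with h2 | h2 | h2 | h2 | h2 | h2 <;>
      rw [h1] at hs1 <;> rw [h2] at hs2 <;>
      simp only [onS_pid, onS_tau2, onS_tau3, onS_tau3sq hb0, onS_tau2tau3 hb0,
        onS_tau2tau3sq] at hs1 hs2 <;>
      first
        | exact absurd (h1.trans h2.symm) hfne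
        | exact L12 hs1 hs2 | exact L12 hs2 hs1
        | exact (L13 haRe hs1 hs2).elim | exact (L13 haRe hs2 hs1).elim
        | exact (L14 haRe hs1 hs2).elim | exact (L14 haRe hs2 hs1).elim
        | exact L15 ha1 hs1 hs2 | exact L15 ha1 hs2 hs1
        | exact L16 hs1 hs2 | exact L16 hs2 hs1
        | exact L23 ha1 hs1 hs2 | exact L23 ha1 hs2 hs1
        | exact L24 hs1 hs2 | exact L24 hs2 hs1
        | exact (L25 haRe hs1 hs2).elim | exact (L25 haRe hs2 hs1).elim
        | exact (L26 haRe hs1 hs2).elim | exact (L26 haRe hs2 hs1).elim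
        | exact (L34 haRe hs1 hs2).elim | exact (L34 haRe hs2 hs1).elim
        | exact L35 hs1 hs2 | exact L35 hs2 hs1
        | exact L36 ha0 hs1 hs2 | exact L36 ha0 hs2 hs1
        | exact L45 ha0 hs1 hs2 | exact L45 ha0 hs2 hs1
        | exact L46 hs1 hs2 | exact L46 hs2 hs1
        | exact (L56 haRe hs1 hs2).elim | exact (L56 haRe hs2 hs1).elim
  · rintro ⟨ha, hb⟩
    rcases ha with ha | ha | ha <;> rcases hb with hb | hb | hb <;> subst ha <;> subst hb
    · exact ⟨σpid, σt2, by decide,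
        by rw [coe_σpid, onS_pid]; norm_num, by rw [coe_σt2, onS_tau2]; norm_num⟩
    · exact ⟨σt3sq, σt2t3, by decide,
        by rw [coe_σt3sq, onS_tau3sq hb0]; norm_num, by rw [coe_σt2t3, onS_tau2tau3 hb0]⟩
    · exact ⟨σt3, σt2t3sq, by decide,
        by rw [coe_σt3, onS_tau3]; norm_num, by rw [coe_σt2t3sq, onS_tau2tau3sq]; norm_num⟩
    · exact ⟨σt3, σt2t3, by decide,
        by rw [coe_σt3, onS_tau3]; norm_num, by rw [coe_σt2t3, onS_tau2tau3 hb0]⟩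
    · exact ⟨σpid, σt2t3sq, by decide,
        by rw [coe_σpid, onS_pid]; norm_num, by rw [coe_σt2t3sq, onS_tau2tau3sq]; norm_num⟩
    · exact ⟨σt2, σt3sq, by decide,
        by rw [coe_σt2, onS_tau2]; norm_num, by rw [coe_σt3sq, onS_tau3sq hb0]; norm_num⟩
    · exact ⟨σt3sq, σt2t3sq, by decide,
        by rw [coe_σt3sq, onS_tau3sq hb0]; norm_num, by rw [coe_σt2t3sq, onS_tau2tau3sq]; norm_num⟩
    · exact ⟨σt2, σt3, by decide,
        by rw [coe_σt2, onS_tau2]; norm_num, by rw [coe_σt3, onS_tau3]; norm_num⟩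
    · exact ⟨σpid, σt2t3, by decide,
        by rw [coe_σpid, onS_pid]; norm_num, by rw [coe_σt2t3, onS_tau2tau3 hb0]⟩

end PappusPaper
end
end
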